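/- Let n≥2 and λ,μ be partitions with |λ|=|μ|, λ_1≤n and μ_1≤n−1. Then K_{λμ}(q) = Σ_{σ∈S_n} ε(σ) [m(μ); σ(λ'+δ)−δ], where δ=(n−1,n−2,…,1,0), λ' is padded with zeros to a vector of length n, σ acts by permuting components, and summands in which σ(λ'+δ)−δ has a negative component vanish. -/

import Mathlib

namespace ABailey

noncomputable section

attribute [local instance] Classical.propDecidable

/-! ## Formal `q`-series with rational exponents, represented by coefficient functions.
`f : CF` represents the formal series `∑_{r ∈ ℚ} (f r) · q^r`; equality of such
coefficient functions is exactly coefficientwise equality of formal series. -/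

abbrev CF : Type := ℚ → ℚ

/-- Coefficientwise sum of a family of formal series. -/
def cfSum {ι : Type*} (F : ι → CF) : CF := fun r => ∑ᶠ i, F i r

/-- The coefficient of `q^r` in an ordinary polynomial in `q`. -/
def coeffAt (P : Polynomial ℚ) (r : ℚ) : ℚ :=
  if r.den = 1 ∧ 0 ≤ r.num then P.coeff r.num.toNat else 0

/-- The coefficient of `q^r` in an ordinary formal power series in `q`. -/
def coeffAtPS (φ : PowerSeries ℚ) (r : ℚ) : ℚ :=
  if r.den = 1 ∧ 0 ≤ r.num then (PowerSeries.coeff (R := ℚ) r.num.toNat) φ else 0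

def ofPoly (P : Polynomial ℚ) : CF := fun r => coeffAt P r

/-- Product (convolution) of two formal series. -/
def cfMul (f g : CF) : CF := fun r => ∑ᶠ p : ℚ, f p * g (r - p)

/-- Product of a formal series with a power series in `q`. -/
def cfMulPS (f : CF) (φ : PowerSeries ℚ) : CF :=
  fun r => ∑ᶠ p : ℚ, f p * coeffAtPS φ (r - p)

/-- Coefficientwise convergence: at every power of `q` only finitely many
members of the family contribute. -/
def CFSumFin {ι : Type*} (F : ι → CF) : Prop :=
  ∀ r : ℚ, (Function.support fun i => F i r).Finite

def CFMulFin (f g : CF) : Prop :=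
  ∀ r : ℚ, (Function.support fun p : ℚ => f p * g (r - p)).Finite

def CFMulPSFin (f : CF) (φ : PowerSeries ℚ) : Prop :=
  ∀ r : ℚ, (Function.support fun p : ℚ => f p * coeffAtPS φ (r - p)).Finite

/-! ## q-Pochhammer symbols and Gaussian binomial coefficients -/

/-- `(q)_r = ∏_{k=1}^r (1 - q^k)`. -/
def qp (r : ℕ) : Polynomial ℚ := ∏ k ∈ Finset.range r, (1 - Polynomial.X ^ (k + 1))

/-- the Gaussian binomial coefficient `[n; m]_q = (q)_n / ((q)_m (q)_{n-m})`. -/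
def qbin (n m : ℕ) : Polynomial ℚ := if m ≤ n then qp n / (qp m * qp (n - m)) else 0

def qbinI (n m : ℤ) : Polynomial ℚ := if 0 ≤ m ∧ m ≤ n then qbin n.toNat m.toNat else 0

def qbinQ (n m : ℚ) : Polynomial ℚ := if n.den = 1 ∧ m.den = 1 then qbinI n.num m.num else 0

/-- a polynomial viewed as a power series. -/
def polyPS (P : Polynomial ℚ) : PowerSeries ℚ := PowerSeries.mk fun d => P.coeff d

/-- `(q)_∞ = ∏_{k ≥ 1} (1 - q^k)` as a formal power series. -/
def qpInf : PowerSeries ℚ := PowerSeries.mk fun d => (qp d).coeff d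

/-! ## Partitions and compositions, as finitely supported functions `ℕ → ℕ`
(`f i` is the `(i+1)`-st part). -/

def IsCompositionF (f : ℕ → ℕ) : Prop := (Function.support f).Finite

def IsPartitionF (f : ℕ → ℕ) : Prop :=
  (∀ i j : ℕ, i ≤ j → f j ≤ f i) ∧ (Function.support f).Finite

/-- the weight `|λ|`. -/
def wt (f : ℕ → ℕ) : ℕ := ∑ᶠ i, f i

/-- the number of nonzero parts `l(λ)`. -/
def lenP (f : ℕ → ℕ) : ℕ := (Function.support f).ncard

/-- conjugate partition: `conj f a = f'_{a+1}` (`0`-indexed). -/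
def conj (f : ℕ → ℕ) : ℕ → ℕ := fun a => {i : ℕ | a < f i}.ncard

/-- `n(λ) = ∑_i (i-1) λ_i`. -/
def nstat (f : ℕ → ℕ) : ℕ := ∑ᶠ i, i * f i

/-- `multOf f a = m_{a+1}(f) = f'_{a+1} - f'_{a+2}`, the multiplicity of the part `a+1`. -/
def multOf (f : ℕ → ℕ) (a : ℕ) : ℕ := conj f a - conj f (a + 1)

/-- `m(η) = (m_1(η), …, m_{n-1}(η))`. -/
def multVec (n : ℕ) (f : ℕ → ℕ) : Fin (n - 1) → ℕ := fun a => multOf f a.1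

/-- `(q)_v = ∏ (q)_{v_a}` for a vector `v`. -/
def qpVec {k : ℕ} (v : Fin k → ℕ) : Polynomial ℚ := ∏ a, qp (v a)

/-- the partition `(1^{L 0} 2^{L 1} ⋯ k^{L (k-1)})` with `L a` parts equal to `a+1`. -/
def partOfMult {k : ℕ} (L : Fin k → ℕ) : ℕ → ℕ :=
  conj fun j => ∑ a : Fin k, if j ≤ a.1 then L a else 0

/-- `c` parts equal to `v` followed by the parts of `f` (e.g. `(N^c) ∪ ν` sorted). -/
def prependParts (v c : ℕ) (f : ℕ → ℕ) : ℕ → ℕ := fun i => if i < c then v else f (i - c)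

/-! ## Kostka numbers (as numbers of semistandard Young tableaux) -/

/-- `T : ℕ → ℕ → ℕ` is a semistandard Young tableau of shape `lam`:
entries (with `0` denoting an empty cell) weakly increase along rows and
strictly increase down columns, and the support is exactly the shape. -/
def IsSSYT (lam : ℕ → ℕ) (T : ℕ → ℕ → ℕ) : Prop :=
  (∀ i j : ℕ, T i j ≠ 0 ↔ j < lam i) ∧
  (∀ i j k : ℕ, j ≤ k → k < lam i → T i j ≤ T i k) ∧
  (∀ i k j : ℕ, i < k → j < lam k → T i j < T k j)

/-- The Kostka number `K_{λμ}`: the number of semistandard Young tableaux of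
shape `lam` and content `mu` (entry `a+1` appears `mu a` times); `0` if `lam`
is not a partition. -/
def kostkaNum (lam mu : ℕ → ℕ) : ℕ :=
  if IsPartitionF lam then
    Nat.card {T : ℕ → ℕ → ℕ //
      IsSSYT lam T ∧ ∀ a : ℕ, {p : ℕ × ℕ | T p.1 p.2 = a + 1}.ncard = mu a}
  else 0

/-- a vector of rationals all of whose entries are nonnegative integers. -/
def IsNatVec {n : ℕ} (v : Fin n → ℚ) : Prop := ∀ i, ∃ m : ℕ, v i = m

def natVec {n : ℕ} (v : Fin n → ℚ) : ℕ → ℕ :=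
  fun i => if h : i < n then (v ⟨i, h⟩).num.toNat else 0

/-- Kostka number with content given by a rational vector (`0` unless all the
entries are nonnegative integers). -/
def kostkaNumV {n : ℕ} (lam : ℕ → ℕ) (v : Fin n → ℚ) : ℕ :=
  if IsNatVec v then kostkaNum lam (natVec v) else 0

/-! ## Schur and Hall–Littlewood polynomials, and Kostka polynomials -/

/-- ambient polynomial ring in `d` variables over `ℚ(q)`. -/
abbrev Rr (d : ℕ) := MvPolynomial (Fin d) (RatFunc ℚ)

/-- its fraction field. -/
abbrev Ell (d : ℕ) := FractionRing (Rr d)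

def xv (d : ℕ) (i : Fin d) : Ell d := algebraMap (Rr d) (Ell d) (MvPolynomial.X i)

def qv (d : ℕ) : Ell d := algebraMap (Rr d) (Ell d) (MvPolynomial.C RatFunc.X)

def polyToL (d : ℕ) (P : Polynomial ℚ) : Ell d :=
  Polynomial.eval₂
    (((algebraMap (Rr d) (Ell d)).comp (MvPolynomial.C)).comp (algebraMap ℚ (RatFunc ℚ)))
    (qv d) P

def sgnE {d : ℕ} (σ : Equiv.Perm (Fin d)) : ℤ := Equiv.Perm.sign σ

/-- one term of the Hall–Littlewood polynomial. -/
def hlTerm (d : ℕ) (lam : ℕ → ℕ) (σ : Equiv.Perm (Fin d)) : Ell d :=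
  (∏ i : Fin d, xv d (σ i) ^ lam i.1) *
  ∏ p : Fin d × Fin d,
    if lam p.2.1 < lam p.1.1 then
      (xv d (σ p.1) - qv d * xv d (σ p.2)) / (xv d (σ p.1) - xv d (σ p.2))
    else 1

/-- the Hall–Littlewood polynomial
`P_λ(x₁,…,x_d;q) = ∑_{σ ∈ S_d/S_d^λ} σ(x^λ ∏_{λ_i > λ_j} (x_i - q x_j)/(x_i - x_j))`,
realised as `1/|S_d^λ|` times the sum over the full symmetric group;
it is `0` if `l(λ) > d`. -/
def hallLittlewood (d : ℕ) (lam : ℕ → ℕ) : Ell d :=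
  if lenP lam ≤ d then
    ((Nat.card {σ : Equiv.Perm (Fin d) // ∀ i : Fin d, lam (σ i).1 = lam i.1} : Ell d))⁻¹ *
      ∑ σ : Equiv.Perm (Fin d), hlTerm d lam σ
  else 0

/-- the alternant `a_f = ∑_σ ε(σ) ∏ᵢ xᵢ^{f(σ i)}`. -/
def aAlt (d : ℕ) (f : Fin d → ℕ) : Ell d :=
  ∑ σ : Equiv.Perm (Fin d), ((sgnE σ : ℤ) : Ell d) * ∏ i : Fin d, xv d i ^ f (σ i)

def deltaV (d : ℕ) : Fin d → ℕ := fun i => d - 1 - i.1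

/-- the Schur polynomial `s_λ = a_{λ+δ} / a_δ` in `d` variables. -/
def schurL (d : ℕ) (lam : ℕ → ℕ) : Ell d :=
  aAlt d (fun i => lam i.1 + deltaV d i) / aAlt d (deltaV d)

/-- `Kf` is a family of Kostka polynomials in weight `d`:
`s_λ = ∑_{μ ⊢ d} K_{λμ}(q) P_μ(x;q)` for every partition `λ ⊢ d`
(in `d` variables, which is enough variables for all `μ ⊢ d`). -/
def kostkaFamSpec (d : ℕ) (Kf : (ℕ → ℕ) → (ℕ → ℕ) → Polynomial ℚ) : Prop :=
  ∀ lam : ℕ → ℕ, IsPartitionF lam → wt lam = d →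
    schurL d lam =
      ∑ᶠ mu ∈ {mu : ℕ → ℕ | IsPartitionF mu ∧ wt mu = d},
        polyToL d (Kf lam mu) * hallLittlewood d mu

def kostkaPolyAux (d : ℕ) (lam mu : ℕ → ℕ) : Polynomial ℚ :=
  if h : ∃ Kf, kostkaFamSpec d Kf then h.choose lam mu else 0

/-- The Kostka polynomial `K_{λμ}(q)`, extended to compositions `μ` by sorting
(`K_{λ,σ(μ)}(q) = K_{λμ}(q)`), and equal to `0` in all other cases. -/
def kostkaPoly (lam mu : ℕ → ℕ) : Polynomial ℚ :=
  if IsPartitionF lam ∧ IsCompositionF mu ∧ wt lam = wt mu then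
    kostkaPolyAux (wt lam) lam (conj (conj mu))
  else 0

/-- a rational vector which is a partition (nonnegative integral, weakly decreasing). -/
def IsPartVec {n : ℕ} (v : Fin n → ℚ) : Prop :=
  IsNatVec v ∧ ∀ i j : Fin n, i ≤ j → v j ≤ v i

/-- `K_{v', mu}(q)` where `v` is a rational vector: `0` unless `v` is a partition. -/
def kostkaPolyConjV {n : ℕ} (v : Fin n → ℚ) (mu : ℕ → ℕ) : Polynomial ℚ :=
  if IsPartVec v then kostkaPoly (conj (natVec v)) mu else 0

/-! ## Supernomial coefficients -/

/-- the completely antisymmetric A_{n-1} supernomial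
`[L; λ] = ∑_{ν ⊢ |λ|} K_{νλ} K_{ν'μ}(q)` where `μ = (1^{L_1} 2^{L_2} ⋯ (n-1)^{L_{n-1}})`;
it vanishes if `λ` has a negative (or non-integral) component. -/
def supernomial (n : ℕ) (L : Fin (n - 1) → ℕ) (lam : Fin n → ℚ) : Polynomial ℚ :=
  if IsNatVec lam then
    ∑ᶠ nu ∈ {nu : ℕ → ℕ | IsPartitionF nu ∧ wt nu = wt (natVec lam)},
      (kostkaNum nu (natVec lam) : Polynomial ℚ) * kostkaPoly (conj nu) (partOfMult L)
  else 0

/-- the completely symmetric A_{n-1} supernomial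
`𝒮_{λμ}(q) = ∑_{ν ⊢ |λ|} K_{νλ} K_{νμ}(q)`. -/
def ssupernomial (lam mu : ℕ → ℕ) : Polynomial ℚ :=
  ∑ᶠ nu ∈ {nu : ℕ → ℕ | IsPartitionF nu ∧ wt nu = wt lam},
    (kostkaNum nu lam : Polynomial ℚ) * kostkaPoly nu mu

/-! ## A_{n-1} weight-space data (inside `ℚ^n`) -/

/-- the fundamental weight `Λ̄_i = ε_1 + ⋯ + ε_i - (i/n)(1,…,1)` (`Λ̄_0 = Λ̄_n = 0`). -/
def fw (n i : ℕ) : Fin n → ℚ := fun j => (if j.1 < i then 1 else 0) - (i : ℚ) / n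

/-- the Weyl vector `ρ = ((n-1)/2, (n-3)/2, …, (1-n)/2)`. -/
def rhoV (n : ℕ) : Fin n → ℚ := fun j => ((n : ℚ) - 1) / 2 - j.1

/-- the simple root `α_a = ε_a - ε_{a+1}` (`1`-indexed `a`). -/
def alphaV (n a : ℕ) : Fin n → ℚ :=
  fun i => (if i.1 + 1 = a then 1 else 0) - (if i.1 + 1 = a + 1 then 1 else 0)

/-- the standard inner product. -/
def ip {n : ℕ} (u v : Fin n → ℚ) : ℚ := ∑ i, u i * v i

/-- membership in the root lattice `Q`. -/
def inQl {n : ℕ} (v : Fin n → ℚ) : Prop :=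
  (∀ i, ∃ z : ℤ, v i = z) ∧ ∑ i, v i = 0

/-- membership in the weight lattice `P`. -/
def inPl {n : ℕ} (v : Fin n → ℚ) : Prop :=
  (∀ i, ∃ z : ℤ, v i * n = z) ∧ (∑ i, v i = 0) ∧
    ∀ i j : Fin n, i.1 + 1 = j.1 → ∃ z : ℤ, v i - v j = z

/-- dominance: weakly decreasing entries. -/
def dominantV {n : ℕ} (v : Fin n → ℚ) : Prop := ∀ i j : Fin n, i ≤ j → v j ≤ v i

/-- the action `σ(k) = (k_{σ(1)}, …, k_{σ(n)})`. -/
def permV {n : ℕ} (σ : Equiv.Perm (Fin n)) (v : Fin n → ℚ) : Fin n → ℚ := fun i => v (σ i)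

def sgn {n : ℕ} (σ : Equiv.Perm (Fin n)) : ℚ := ((Equiv.Perm.sign σ : ℤ) : ℚ)

/-- the longest element (reversal) of `S_n`. -/
def revP (n : ℕ) : Equiv.Perm (Fin n) := ⟨Fin.rev, Fin.rev, Fin.rev_rev, Fin.rev_rev⟩

/-! ## The fermionic series `F_{ην}(q)` and `C_{μν}(q)` at integer level `N` -/

abbrev MIdx (n N : ℕ) := Fin (n - 1) × Fin (N - 1)

/-- the A Cartan matrix `C_{a,b}` (`1`-indexed). -/
def cartan (a b : ℕ) : ℚ := if a = b then 2 else if a + 1 = b ∨ b + 1 = a then -1 else 0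

/-- the inverse A_{N-1} Cartan matrix `C̄⁻¹_{j,k} = min(j,k) - jk/N`
(also used for the boundary indices `0` and `N`, where it vanishes). -/
def cbarInv (N j k : ℕ) : ℚ := (min j k : ℚ) - (j : ℚ) * k / N

/-- `½ m (C ⊗ C̄⁻¹) m`. -/
def quadF (n N : ℕ) (m : MIdx n N → ℕ) : ℚ :=
  (1 / 2) * ∑ v : MIdx n N, ∑ w : MIdx n N,
    (m v : ℚ) * cartan (v.1.1 + 1) (w.1.1 + 1) * cbarInv N (v.2.1 + 1) (w.2.1 + 1) * (m w : ℚ)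

/-- `∑_{i=1}^{l(ν)} (e_1 ⊗ ē_{N-ν_i}) (I ⊗ C̄⁻¹) m`. -/
def linF (n N : ℕ) (nu : ℕ → ℕ) (m : MIdx n N → ℕ) : ℚ :=
  ∑ᶠ i ∈ Function.support nu, ∑ v : MIdx n N,
    (if v.1.1 = 0 then (1 : ℚ) else 0) * cbarInv N (N - nu i) (v.2.1 + 1) * (m v : ℚ)

/-- the restriction `∑_{a,j} j m_j^{(a)} α_a ∈ N·Q + μ₀ - |ν| Λ̄_1`. -/
def restrF (n N : ℕ) (mu0 : Fin n → ℚ) (nuwt : ℕ) (m : MIdx n N → ℕ) : Prop :=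
  ∃ w : Fin n → ℚ, inQl w ∧
    ∀ i : Fin n,
      (∑ v : MIdx n N, ((v.2.1 + 1 : ℕ) : ℚ) * (m v : ℚ) * alphaV n (v.1.1 + 1) i)
        = N * w i + mu0 i - (nuwt : ℚ) * fw n 1 i

/-- the vector `p` determined by
`(C ⊗ Ī) m + (I ⊗ C̄) p = (m(η) ⊗ ē_1) + ∑_{i=1}^{l(ν)} (e_1 ⊗ ē_{N-ν_i})`. -/
def pvec (n N : ℕ) (eta nu : ℕ → ℕ) (m : MIdx n N → ℕ) : MIdx n N → ℚ :=
  fun v => ∑ k : Fin (N - 1), cbarInv N (v.2.1 + 1) (k.1 + 1) *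
    ((if k.1 = 0 then (multVec n eta v.1 : ℚ) else 0) +
     (if v.1.1 = 0 then ({i : ℕ | nu i ≠ 0 ∧ N - nu i = k.1 + 1}.ncard : ℚ) else 0) -
     ∑ b : Fin (n - 1), cartan (v.1.1 + 1) (b.1 + 1) * (m (b, k) : ℚ))

/-- `[m + p; m]_q` where `p` may a priori be rational (it vanishes unless `p`
is a nonnegative integer). -/
def qbinShift (mv : ℕ) (pv : ℚ) : Polynomial ℚ :=
  if pv.den = 1 ∧ 0 ≤ pv.num then qbin (mv + pv.num.toNat) mv else 0

/-- `μ(η) = ∑_a m_a(η) Λ̄_a`. -/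
def muOf (n : ℕ) (eta : ℕ → ℕ) : Fin n → ℚ :=
  fun i => ∑ a : Fin (n - 1), (multVec n eta a : ℚ) * fw n (a.1 + 1) i

/-- the exponent prefactor `n(ν) - (n-1)|ν|²/(2nN) + ⟨μ,μ⟩/(2N)`. -/
def preF (n N : ℕ) (mu0 : Fin n → ℚ) (nu : ℕ → ℕ) : ℚ :=
  (nstat nu : ℚ) - ((n : ℚ) - 1) * (wt nu : ℚ) ^ 2 / (2 * n * N) + ip mu0 mu0 / (2 * N)

/-- the polynomial `F_{ην}(q)` (for `N = 0`: `F_{η,∅} = δ_{η,∅}`). -/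
def FF (n N : ℕ) (eta nu : ℕ → ℕ) : CF :=
  if N = 0 then (fun r => if (∀ i, eta i = 0) ∧ r = 0 then 1 else 0)
  else
    cfSum (fun m : {m : MIdx n N → ℕ // restrF n N (muOf n eta) (wt nu) m} => fun r =>
      coeffAt (∏ v : MIdx n N, qbinShift (m.1 v) (pvec n N eta nu m.1 v))
        (r - (preF n N (muOf n eta) nu + quadF n N m.1 - linF n N nu m.1)))

/-- the series `C_{μν}(q)` (for `N = 0`: `C_{μ,∅} = δ_{μ,∅}`). -/
def CC (n N : ℕ) (mu0 : Fin n → ℚ) (nu : ℕ → ℕ) : CF :=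
  if N = 0 then (fun r => if mu0 = 0 ∧ r = 0 then 1 else 0)
  else
    cfSum (fun m : {m : MIdx n N → ℕ // restrF n N mu0 (wt nu) m} => fun r =>
      coeffAtPS ((qpInf ^ (n - 1))⁻¹ * ∏ v : MIdx n N, (polyPS (qp (m.1 v)))⁻¹)
        (r - (preF n N mu0 nu + quadF n N m.1 - linF n N nu m.1)))

/-! ## A_{n-1} (conjugate) Bailey pairs -/

/-- the factor `(q)_{m(η)}⁻¹ · [m(η); (|η|/n)(1,…,1) - k - ℓ Λ̄_{n-1}]`
as a power series in `q`. -/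
def bpPS (n ℓ : ℕ) (k : Fin n → ℚ) (eta : ℕ → ℕ) : PowerSeries ℚ :=
  (polyPS (qpVec (multVec n eta)))⁻¹ *
    polyPS (supernomial n (multVec n eta)
      (fun i => (wt eta : ℚ) / n - k i - (ℓ : ℚ) * fw n (n - 1) i))

/-- `(α, β)` is an A_{n-1} Bailey pair relative to `q^ℓ`. -/
def IsBaileyPair (n ℓ : ℕ) (hn : 0 < n)
    (α : (Fin n → ℚ) → CF) (β : (ℕ → ℕ) → CF) : Prop :=
  ∀ eta : ℕ → ℕ, IsPartitionF eta → eta 0 ≤ n - 1 → wt eta % n = ℓ % n →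
    β eta = cfSum (fun k : {k : Fin n → ℚ // inQl k ∧ dominantV k ∧
        (n : ℚ) * k ⟨0, hn⟩ ≤ (wt eta : ℚ) - ℓ} =>
      cfMulPS (α k.1) (bpPS n ℓ k.1 eta))

/-- `(γ, δ)` is an A_{n-1} conjugate Bailey pair relative to `q^ℓ`:
for every `k ∈ Q ∩ P_+`,
`γ_k = ∑_η δ_η/(q)_{m(η)} · [m(η); (|η|/n)(1,…,1) - k - ℓΛ̄_{n-1}]`,
the sum over partitions `η` with `η_1 ≤ n-1`, `|η| ≡ ℓ (mod n)`,
`|η| ≥ ℓ + n k_1`, coefficientwise. -/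
def IsConjBaileyPair (n ℓ : ℕ) (hn : 0 < n)
    (γ : (Fin n → ℚ) → CF) (δ : (ℕ → ℕ) → CF) : Prop :=
  ∀ k : Fin n → ℚ, inQl k → dominantV k →
    γ k = cfSum (fun eta : {eta : ℕ → ℕ // IsPartitionF eta ∧ eta 0 ≤ n - 1 ∧
        (ℓ : ℚ) + n * k ⟨0, hn⟩ ≤ (wt eta : ℚ) ∧ wt eta % n = ℓ % n} =>
      cfMulPS (δ eta.1) (bpPS n ℓ k eta.1))

/-! ## Configuration sums `X_{η,Λ,Λ'}` at (possibly fractional) level -/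

/-- one term of the configuration sum: `σ ∈ S_n` and `k = p'·w + σ(Λ̄+ρ)`, `w ∈ Q`. -/
def Xterm (n p' : ℕ) (Nl : ℚ) (eta : ℕ → ℕ) (Lb Lb' : Fin n → ℚ)
    (σ : Equiv.Perm (Fin n)) (w : Fin n → ℚ) : CF :=
  fun r =>
    let kv : Fin n → ℚ := fun i => (p' : ℚ) * w i + (Lb (σ i) + rhoV n (σ i))
    sgn σ * coeffAt
      (supernomial n (multVec n eta)
        (fun i => (wt eta : ℚ) / n + kv i - Lb' i - rhoV n i))
      (r - (ip kv kv / (2 * ((n : ℚ) + Nl)) -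
            ip (fun j => Lb j + rhoV n j) (fun j => Lb j + rhoV n j) / (2 * ((n : ℚ) + Nl))))

/-- the configuration sum `X_{η,Λ,Λ'}(q)`, with classical parts `Lb = Λ̄`,
`Lb' = Λ̄'`, at level `Nl = p'/p - n`; it vanishes if
`|η|Λ̄_1 - Λ̄ + Λ̄' ∉ Q`. -/
def Xconf (n p' : ℕ) (Nl : ℚ) (eta : ℕ → ℕ) (Lb Lb' : Fin n → ℚ) : CF :=
  if inQl (fun i => (wt eta : ℚ) * fw n 1 i - Lb i + Lb' i) then
    cfSum (fun sw : Equiv.Perm (Fin n) × {w : Fin n → ℚ // inQl w} =>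
      Xterm n p' Nl eta Lb Lb' sw.1 sw.2.1)
  else 0

/-! ## The sets `P^{(p,p')}` of (admissible) weights -/

/-- `a : Fin n → ℚ` records the coefficients of `Λ = ∑ a_i Λ_i`;
`Λ ∈ P^{(p,p')}` iff `a_i ∈ ℤ_+` for `i ≥ 1`, `∑_{i≥1} a_i ≤ p' - n` and
`∑_i a_i = p'/p - n`. -/
def inPpp (n p p' : ℕ) (a : Fin n → ℚ) : Prop :=
  (∀ i : Fin n, i.1 ≠ 0 → ∃ z : ℕ, a i = z) ∧
  (∑ i ∈ Finset.univ.filter (fun i : Fin n => i.1 ≠ 0), a i) ≤ (p' : ℚ) - n ∧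
  (∑ i, a i) = (p' : ℚ) / p - (n : ℚ)

/-- the classical part `Λ̄ = ∑ a_i Λ̄_i`. -/
def clsOf (n : ℕ) (a : Fin n → ℚ) : Fin n → ℚ := fun j => ∑ i : Fin n, a i * fw n i.1 j

/-- the complement `Λ^c = ∑ a_i Λ_{n-i}`, on coefficient vectors. -/
def compA {n : ℕ} (a : Fin n → ℚ) : Fin n → ℚ :=
  fun j => a ⟨(n - j.1) % n, Nat.mod_lt _ (by have := j.2; omega)⟩

/-- the complement `η^c` of a partition with all parts `≤ n-1`:
the multiplicities `ζ_a = m_a(η)` get reversed. -/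
def etaCompl (n : ℕ) (eta : ℕ → ℕ) : ℕ → ℕ :=
  partOfMult (fun a : Fin (n - 1) => multVec n eta ⟨n - 2 - a.1, by have := a.2; omega⟩)

/-- `m̄_Λ = ‖Λ̄+ρ‖²/(2(n+N))`. -/
def mbarOf (n : ℕ) (Nl : ℚ) (Lb : Fin n → ℚ) : ℚ :=
  ip (fun j => Lb j + rhoV n j) (fun j => Lb j + rhoV n j) / (2 * ((n : ℚ) + Nl))

/-- the modular anomaly `m_Λ = ‖Λ̄+ρ‖²/(2(n+N)) - ‖ρ‖²/(2n)`. -/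
def mAnom (n : ℕ) (Nl : ℚ) (Lb : Fin n → ℚ) : ℚ :=
  mbarOf n Nl Lb - ip (rhoV n) (rhoV n) / (2 * (n : ℚ))

/-! ## String functions at (possibly fractional) level -/

/-- two-variable coefficient functions: `f v r` = coefficient of `x^v q^r`. -/
abbrev CF2 (n : ℕ) : Type := (Fin n → ℚ) → ℚ → ℚ

/-- the classical theta function `Θ_{λ,m}(x;q^{scale})`. -/
def thetaCF2 (n : ℕ) (lam : Fin n → ℚ) (md scale : ℚ) : CF2 n :=
  fun v r =>
    if (∃ w, inQl w ∧ ∀ i, v i = md * w i + lam i) ∧ r = scale * ip v v / (2 * md) then 1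
    else 0

/-- the numerator `∑_σ ε(σ) Θ_{σ(Λ̄+ρ),p'}(x;q^p)` of the (Kac–Wakimoto)
character formula. -/
def numerKW (n p p' : ℕ) (Lb : Fin n → ℚ) : CF2 n :=
  fun v r => ∑ σ : Equiv.Perm (Fin n),
    sgn σ * thetaCF2 n (permV σ (fun j => Lb j + rhoV n j)) (p' : ℚ) (p : ℚ) v r

/-- the denominator `∑_σ ε(σ) Θ_{σ(ρ),n}(x;q)`. -/
def denomKW (n : ℕ) : CF2 n :=
  fun v r => ∑ σ : Equiv.Perm (Fin n), sgn σ * thetaCF2 n (permV σ (rhoV n)) (n : ℚ) 1 v r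

/-- convolution product of two-variable coefficient functions. -/
def mul2 {n : ℕ} (f g : CF2 n) : CF2 n :=
  fun v r => ∑ᶠ ws : (Fin n → ℚ) × ℚ, f ws.1 ws.2 * g (fun i => v i - ws.1 i) (r - ws.2)

/-- `Cfam` is the family of string functions `C_{μ,Λ}(q)` of
`Λ ∈ P^{(p,p')}` with classical part `Lb`:
`χ_Λ(x;q) = ∑_{μ ∈ P} q^{⟨μ,μ⟩/(2N)} C_{μ,Λ}(q) x^μ` where
`χ_Λ = numer/denom`, i.e. `numer = denom · (∑ _μ …)`, the product being a
locally finite (coefficientwise) convolution. -/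
def StringSpec (n p p' : ℕ) (Lb : Fin n → ℚ) (Cfam : (Fin n → ℚ) → CF) : Prop :=
  (∀ μ : Fin n → ℚ, ¬ inPl μ → Cfam μ = 0) ∧
  (∀ μ : Fin n → ℚ, ∃ r0 : ℚ, ∀ r < r0, Cfam μ r = 0) ∧
  (∀ v : Fin n → ℚ, ∀ r : ℚ,
    (Function.support fun ws : (Fin n → ℚ) × ℚ =>
      denomKW n ws.1 ws.2 *
        (if inPl (fun i => v i - ws.1 i) then
          Cfam (fun i => v i - ws.1 i)
            ((r - ws.2) - ip (fun i => v i - ws.1 i) (fun i => v i - ws.1 i) /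
              (2 * ((p' : ℚ) / p - n)))
        else 0)).Finite) ∧
  numerKW n p p' Lb =
    mul2 (denomKW n)
      (fun u s => if inPl u then Cfam u (s - ip u u / (2 * ((p' : ℚ) / p - n))) else 0)

/-- the string functions `C_{μ,Λ}(q)`, defined by the expansion of the
(Kac–Wakimoto) character in theta functions. -/
def stringC (n p p' : ℕ) (Lb : Fin n → ℚ) : (Fin n → ℚ) → CF :=
  if h : ∃ Cfam, StringSpec n p p' Lb Cfam then h.choose else fun _ => 0

/-- the normalized string function `𝒞_{μ,Λ}(q) = q^{⟨μ,μ⟩/(2N) - m_Λ} C_{μ,Λ}(q)`. -/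
def stringNorm (n p p' : ℕ) (Lb : Fin n → ℚ) (μ : Fin n → ℚ) : CF :=
  fun r =>
    stringC n p p' Lb μ
      (r - (ip μ μ / (2 * ((p' : ℚ) / p - n)) - mAnom n ((p' : ℚ) / p - n) Lb))

/-! ## Terms for Conjecture 1 and the orthogonality relation -/

/-- `λ = n·w + σ(ρ) - ρ`. -/
def lamShift (n : ℕ) (σ : Equiv.Perm (Fin n)) (w : Fin n → ℚ) : Fin n → ℚ :=
  fun i => (n : ℚ) * w i + rhoV n (σ i) - rhoV n i

/-- one term of the sum in Conjecture 1: indexed by a partition `eta`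
(`η_1 ≤ n-1`, `|η| ≡ |μ| (mod n)`), `σ ∈ S_n` and `λ ∈ nQ + σ(ρ) - ρ`. -/
def conj1Term (n : ℕ) (mu : ℕ → ℕ) (nuv : Fin n → ℤ) (eta : ℕ → ℕ)
    (σ : Equiv.Perm (Fin n)) (w : Fin n → ℚ) : CF :=
  fun r =>
    sgn σ * coeffAtPS
      ((polyPS (qpVec (multVec n eta)))⁻¹ *
        polyPS (supernomial n (multVec n eta)
          (fun i => ((wt eta : ℚ) - ∑ j, (nuv j : ℚ)) / n + (nuv i : ℚ))) *
        polyPS (supernomial n (multVec n eta)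
          (fun i => ((wt eta : ℚ) - (wt mu : ℚ)) / n + (mu i.1 : ℚ) - lamShift n σ w i)))
      (r - ip (lamShift n σ w) (fun i => lamShift n σ w i + 2 * rhoV n i) / (2 * n))

/-- Conjecture 1: for `μ` a partition with `l(μ) ≤ n` and `ν ∈ ℤ^n` with
`|μ| = |ν|`,
`K_{μν} = ∑_{η,σ,λ} ε(σ) q^{⟨λ,λ+2ρ⟩/(2n)} (q)_{m(η)}⁻¹ ·
[m(η); ((|η|-|ν|)/n)(1,…,1)+ν] · [m(η); ((|η|-|μ|)/n)(1,…,1)+μ-λ]`. -/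
def Conjecture1 (n : ℕ) : Prop :=
  ∀ mu : ℕ → ℕ, IsPartitionF mu → lenP mu ≤ n →
  ∀ nuv : Fin n → ℤ, (∑ j, nuv j) = (wt mu : ℤ) →
    (fun r : ℚ => if r = 0 then (kostkaNumV mu (fun i => (nuv i : ℚ)) : ℚ) else 0) =
      cfSum (fun t : {eta : ℕ → ℕ // IsPartitionF eta ∧ eta 0 ≤ n - 1 ∧
            wt eta % n = wt mu % n} ×
          Equiv.Perm (Fin n) × {w : Fin n → ℚ // inQl w} =>
        conj1Term n mu nuv t.1.1 t.2.1 t.2.2.1)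

/-- one term of the orthogonality sum (Corollary 1): indexed by `eta`, `σ`, and
`λ = n·w + σ(ρ) - ρ` with `w ∈ Q`. -/
def orthoTerm (n : ℕ) (mu nu : ℕ → ℕ) (eta : ℕ → ℕ)
    (σ : Equiv.Perm (Fin n)) (w : Fin n → ℚ) : CF :=
  fun r =>
    sgn σ * coeffAtPS
      ((polyPS (qpVec (multVec n eta)))⁻¹ *
        polyPS (kostkaPolyConjV
          (fun i : Fin n => ((wt eta : ℚ) - (wt nu : ℚ)) / n + (nu i.1 : ℚ)) eta) *
        polyPS (supernomial n (multVec n eta)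
          (fun i => ((wt eta : ℚ) - (wt mu : ℚ)) / n + (mu i.1 : ℚ) - lamShift n σ w i)))
      (r - ip (lamShift n σ w) (fun i => lamShift n σ w i + 2 * rhoV n i) / (2 * n))

/-- the orthogonality relation of Corollary 1 for partitions `μ, ν`:
`∑_{η,σ,λ} ε(σ) q^{⟨λ,λ+2ρ⟩/(2n)} K_{(((|η|-|ν|)/n)(1,…,1)+ν)',η}(q)/(q)_{m(η)} ·
[m(η); ((|η|-|μ|)/n)(1,…,1)+μ-λ] = δ_{μ,ν}`. -/
def OrthoRel (n : ℕ) (mu nu : ℕ → ℕ) : Prop :=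
  cfSum (fun t : {eta : ℕ → ℕ // IsPartitionF eta ∧ eta 0 ≤ n - 1 ∧
        wt eta % n = wt mu % n} ×
      Equiv.Perm (Fin n) × {w : Fin n → ℚ // inQl w} =>
    orthoTerm n mu nu t.1.1 t.2.1 t.2.2.1) =
  fun r : ℚ => if mu = nu ∧ r = 0 then 1 else 0

section


/-- A finite downward-closed set of naturals is an initial segment. -/
lemma mem_iff_lt_ncard {S : Set ℕ} (hfin : S.Finite)
    (hdc : ∀ ⦃j k : ℕ⦄, j ∈ S → k ≤ j → k ∈ S) (j : ℕ) : j ∈ S ↔ j < S.ncard := by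
  have hcard : S.ncard = hfin.toFinset.card := Set.ncard_eq_toFinset_card _ hfin
  constructor
  · intro hj
    have hsub : Finset.range (j + 1) ⊆ hfin.toFinset := by
      intro k hk
      simp only [Finset.mem_range] at hk
      simp only [Set.Finite.mem_toFinset]
      exact hdc hj (Nat.lt_succ_iff.mp hk)
    have := Finset.card_le_card hsub
    simp only [Finset.card_range] at this
    omega
  · intro hj
    by_contra hjS
    have hsub : hfin.toFinset ⊆ Finset.range j := by
      intro k hk
      simp only [Set.Finite.mem_toFinset] at hk
      simp only [Finset.mem_range]
      by_contra hkj
      exact hjS (hdc hk (Nat.le_of_not_lt hkj))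
    have := Finset.card_le_card hsub
    simp only [Finset.card_range] at this
    omega

lemma ncard_Iio (m : ℕ) : {a : ℕ | a < m}.ncard = m := by
  have : {a : ℕ | a < m} = ↑(Finset.range m) := by
    ext a; simp
  rw [this, Set.ncard_coe_finset, Finset.card_range]

lemma ncard_Ico (a b : ℕ) : {j : ℕ | a ≤ j ∧ j < b}.ncard = b - a := by
  have : {j : ℕ | a ≤ j ∧ j < b} = ↑(Finset.Ico a b) := by
    ext j; simp
  rw [this, Set.ncard_coe_finset, Nat.card_Ico]

section conj

variable {f : ℕ → ℕ}

lemma conj_set_finite (hf : (Function.support f).Finite) (a : ℕ) :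
    {i : ℕ | a < f i}.Finite := by
  apply hf.subset
  intro i hi
  simp only [Set.mem_setOf_eq] at hi
  simp only [Function.mem_support]
  omega

/-- key characterization of the conjugate partition. -/
lemma lt_conj_iff (hf : IsPartitionF f) (a i : ℕ) : i < conj f a ↔ a < f i := by
  rw [show conj f a = {i : ℕ | a < f i}.ncard from rfl]
  rw [← mem_iff_lt_ncard (conj_set_finite hf.2 a)
    (fun j k hj hkj => lt_of_lt_of_le hj (hf.1 k j hkj))]
  rfl

lemma conj_antitone (hf : (Function.support f).Finite) {a b : ℕ} (hab : a ≤ b) :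
    conj f b ≤ conj f a :=
  Set.ncard_le_ncard (fun i hi => lt_of_le_of_lt hab hi) (conj_set_finite hf a)

lemma conj_eq_zero (hf : IsPartitionF f) {a : ℕ} (ha : f 0 ≤ a) : conj f a = 0 := by
  have : {i : ℕ | a < f i} = ∅ := by
    ext i
    simp only [Set.mem_setOf_eq, Set.mem_empty_iff_false, iff_false, not_lt]
    exact le_trans (hf.1 0 i (Nat.zero_le i)) ha
  rw [show conj f a = {i : ℕ | a < f i}.ncard from rfl, this, Set.ncard_empty]

lemma isPartitionF_conj (hf : IsPartitionF f) : IsPartitionF (conj f) := by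
  constructor
  · exact fun a b hab => conj_antitone hf.2 hab
  · apply Set.Finite.subset (Set.finite_Iio (f 0))
    intro a ha
    simp only [Function.mem_support] at ha
    simp only [Set.mem_Iio]
    by_contra h
    exact ha (conj_eq_zero hf (Nat.le_of_not_lt h))

lemma conj_conj (hf : IsPartitionF f) : conj (conj f) = f := by
  funext i
  have h1 : {a : ℕ | i < conj f a} = {a : ℕ | a < f i} := by
    ext a
    simp only [Set.mem_setOf_eq]
    exact lt_conj_iff hf a i
  rw [show conj (conj f) i = {a : ℕ | i < conj f a}.ncard from rfl, h1, ncard_Iio]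

end conj

section wt

lemma wt_eq_sum_range {f : ℕ → ℕ} {N : ℕ} (h : ∀ i, N ≤ i → f i = 0) :
    wt f = ∑ i ∈ Finset.range N, f i := by
  apply finsum_eq_finset_sum_of_support_subset
  intro i hi
  simp only [Function.mem_support] at hi
  simp only [Finset.coe_range, Set.mem_Iio]
  by_contra hc
  exact hi (h i (Nat.le_of_not_lt hc))

lemma support_bound {f : ℕ → ℕ} (hf : (Function.support f).Finite) :
    ∃ N, ∀ i, N ≤ i → f i = 0 := by
  rcases Set.Finite.bddAbove hf with ⟨N, hN⟩
  exact ⟨N + 1, fun i hi => by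
    by_contra h
    have := hN (Function.mem_support.mpr h)
    omega⟩

lemma wt_mono {f g : ℕ → ℕ} (hf : (Function.support f).Finite)
    (h : ∀ i, g i ≤ f i) : wt g ≤ wt f := by
  rcases support_bound hf with ⟨N, hN⟩
  have hgN : ∀ i, N ≤ i → g i = 0 := fun i hi => by have := h i; have := hN i hi; omega
  rw [wt_eq_sum_range hN, wt_eq_sum_range hgN]
  exact Finset.sum_le_sum (fun i _ => h i)

lemma le_wt {f : ℕ → ℕ} (hf : (Function.support f).Finite) (i : ℕ) : f i ≤ wt f := by
  rcases support_bound hf with ⟨N, hN⟩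
  rw [wt_eq_sum_range hN]
  by_cases hi : i < N
  · exact Finset.single_le_sum (f := f) (fun j _ => Nat.zero_le _) (Finset.mem_range.mpr hi)
  · rw [hN i (by omega)]; exact Nat.zero_le _

lemma lt_wt_of_part {f : ℕ → ℕ} (hf : IsPartitionF f) {i : ℕ} (hi : f i ≠ 0) :
    i < wt f := by
  rcases support_bound hf.2 with ⟨N, hN⟩
  have hiN : i < N := by
    by_contra h
    exact hi (hN i (by omega))
  rw [wt_eq_sum_range hN]
  calc i < ∑ j ∈ Finset.range (i + 1), f j := by
        have : ∀ j ∈ Finset.range (i + 1), 1 ≤ f j := by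
          intro j hj
          simp only [Finset.mem_range] at hj
          have := hf.1 j i (by omega)
          omega
        calc i < i + 1 := by omega
        _ = ∑ _j ∈ Finset.range (i + 1), 1 := by simp
        _ ≤ _ := Finset.sum_le_sum this
    _ ≤ _ := Finset.sum_le_sum_of_subset (by
        intro j hj
        simp only [Finset.mem_range] at *
        omega)

lemma wt_conj {f : ℕ → ℕ} (hf : IsPartitionF f) : wt (conj f) = wt f := by
  rcases support_bound hf.2 with ⟨N₀, hN₀⟩
  set N := N₀ + f 0 + 1 with hN
  have hfN : ∀ i, N ≤ i → f i = 0 := fun i hi => hN₀ i (by omega)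
  have hcN : ∀ a, N ≤ a → conj f a = 0 := fun a ha => conj_eq_zero hf (by omega)
  rw [wt_eq_sum_range hfN, wt_eq_sum_range hcN]
  have hconj : ∀ a, conj f a = (Finset.filter (fun i => a < f i) (Finset.range N)).card := by
    intro a
    rw [show conj f a = {i : ℕ | a < f i}.ncard from rfl]
    have : {i : ℕ | a < f i} = ↑(Finset.filter (fun i => a < f i) (Finset.range N)) := by
      ext i
      simp only [Set.mem_setOf_eq, Finset.coe_filter, Finset.mem_range, Set.mem_setOf_eq]
      constructor
      · intro h
        refine ⟨?_, h⟩
        by_contra hc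
        rw [hfN i (by omega)] at h
        omega
      · exact fun h => h.2
    rw [this, Set.ncard_coe_finset]
  calc ∑ a ∈ Finset.range N, conj f a
      = ∑ a ∈ Finset.range N, ∑ i ∈ Finset.range N, (if a < f i then 1 else 0) := by
        apply Finset.sum_congr rfl
        intro a _
        rw [hconj a, Finset.card_filter]
    _ = ∑ i ∈ Finset.range N, ∑ a ∈ Finset.range N, (if a < f i then 1 else 0) :=
        Finset.sum_comm
    _ = ∑ i ∈ Finset.range N, f i := by
        apply Finset.sum_congr rfl
        intro i hi
        have hfi : f i ≤ N := by
          have := hf.1 0 i (Nat.zero_le i)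
          omega
        have hflt : Finset.filter (fun a => a < f i) (Finset.range N) =
            Finset.range (f i) := by
          ext a
          simp only [Finset.mem_filter, Finset.mem_range]
          omega
        rw [← Finset.card_filter, hflt, Finset.card_range]

end wt

section fin

/-- the set of partitions of `d` is finite. -/
lemma finite_partitions (d : ℕ) : {f : ℕ → ℕ | IsPartitionF f ∧ wt f = d}.Finite := by
  set S := {f : ℕ → ℕ | IsPartitionF f ∧ wt f = d} with hS
  have hinj : Set.InjOn
      (fun (f : ℕ → ℕ) => fun i : Fin d => (⟨min (f i.1) d, by omega⟩ : Fin (d+1))) S := by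
    intro f hf g hg hfg
    simp only [hS, Set.mem_setOf_eq] at hf hg
    funext i
    by_cases hi : i < d
    · have h1 := congrFun hfg ⟨i, hi⟩
      simp only [Fin.mk.injEq] at h1
      have h2 : f i ≤ d := hf.2 ▸ le_wt hf.1.2 i
      have h3 : g i ≤ d := hg.2 ▸ le_wt hg.1.2 i
      omega
    · have hfi : f i = 0 := by
        by_contra h
        have := lt_wt_of_part hf.1 h
        omega
      have hgi : g i = 0 := by
        by_contra h
        have := lt_wt_of_part hg.1 h
        omega
      rw [hfi, hgi]
  exact Set.Finite.of_finite_image (Set.toFinite _) hinj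

/-- fiberwise counting of a finite planar set. -/
lemma ncard_fiberwise {S : Set (ℕ × ℕ)} (hfin : S.Finite) {N : ℕ}
    (hN : ∀ p ∈ S, p.1 < N) :
    S.ncard = ∑ i ∈ Finset.range N, {j : ℕ | (i, j) ∈ S}.ncard := by
  rw [Set.ncard_eq_toFinset_card _ hfin]
  rw [Finset.card_eq_sum_card_fiberwise (f := fun p => p.1) (t := Finset.range N)
    (fun p hp => Finset.mem_range.mpr (hN p (hfin.mem_toFinset.mp hp)))]
  apply Finset.sum_congr rfl
  intro i _
  have hfin2 : {j : ℕ | (i, j) ∈ S}.Finite := by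
    have : {j : ℕ | (i, j) ∈ S} ⊆ (fun p : ℕ × ℕ => p.2) '' S := by
      intro j hj
      exact ⟨(i, j), hj, rfl⟩
    exact (hfin.image _).subset this
  rw [Set.ncard_eq_toFinset_card _ hfin2]
  apply Finset.card_bij (fun p _ => p.2)
  · intro p hp
    simp only [Finset.mem_filter] at hp
    simp only [Set.Finite.mem_toFinset, Set.mem_setOf_eq]
    have : (i, p.2) = p := by
      rw [← hp.2]
    rw [this]
    exact hfin.mem_toFinset.mp hp.1
  · intro p hp q hq hpq
    simp only [Finset.mem_filter] at hp hq
    ext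
    · rw [hp.2, hq.2]
    · exact hpq
  · intro j hj
    simp only [Set.Finite.mem_toFinset, Set.mem_setOf_eq] at hj
    exact ⟨(i, j), by simp [hfin.mem_toFinset, hj], rfl⟩

end fin


end
section


lemma le_of_lt_imp {a b : ℕ} (h : ∀ j, j < a → j < b) : a ≤ b := by
  rcases Nat.eq_zero_or_pos a with h0 | h0
  · omega
  · have := h (a - 1) (by omega)
    omega

/-- the cells of the Young diagram of `ν`. -/
def cells (ν : ℕ → ℕ) : Set (ℕ × ℕ) := {p | p.2 < ν p.1}

lemma cells_finite {ν : ℕ → ℕ} (hν : IsPartitionF ν) : (cells ν).Finite := by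
  apply Set.Finite.subset ((Set.finite_Iio (wt ν)).prod (Set.finite_Iio (wt ν)))
  intro p hp
  have hp' : p.2 < ν p.1 := hp
  have h1 : p.1 < wt ν := lt_wt_of_part hν (by omega)
  have h2 : ν p.1 ≤ wt ν := le_wt hν.2 p.1
  exact ⟨by simpa using h1, by simp only [Set.mem_Iio]; omega⟩

lemma ncard_cells {ν : ℕ → ℕ} (hν : IsPartitionF ν) : (cells ν).ncard = wt ν := by
  rcases support_bound hν.2 with ⟨N, hN⟩
  rw [ncard_fiberwise (cells_finite hν) (N := N)
    (fun p hp => by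
      by_contra hc
      have h2 : ν p.1 = 0 := hN p.1 (by omega)
      have : p.2 < ν p.1 := hp
      omega)]
  rw [wt_eq_sum_range hN]
  apply Finset.sum_congr rfl
  intro i _
  have : {j : ℕ | (i, j) ∈ cells ν} = {j : ℕ | j < ν i} := rfl
  rw [this, ncard_Iio]

section tab

variable {ν β : ℕ → ℕ} {T : ℕ → ℕ → ℕ} {m : ℕ}

/-- the content sets of a tableau lie inside the diagram. -/
lemma cnt_subset_cells (hT : IsSSYT ν T) (a : ℕ) :
    {p : ℕ × ℕ | T p.1 p.2 = a + 1} ⊆ cells ν := by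
  intro p hp
  have : T p.1 p.2 = a + 1 := hp
  exact (hT.1 p.1 p.2).mp (by omega)

lemma entry_pos (hT : IsSSYT ν T) {i j : ℕ} (hj : j < ν i) : 1 ≤ T i j := by
  have := (hT.1 i j).mpr hj
  omega

lemma entry_le (hν : IsPartitionF ν) (hT : IsSSYT ν T)
    (hc : ∀ a, {p : ℕ × ℕ | T p.1 p.2 = a + 1}.ncard = β a)
    (hβ : ∀ a, m ≤ a → β a = 0) {i j : ℕ} (hj : j < ν i) : T i j ≤ m := by
  by_contra hgt
  set a := T i j - 1 with ha
  have hTa : T i j = a + 1 := by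
    have := entry_pos hT hj
    omega
  have ham : m ≤ a := by omega
  have hne : {p : ℕ × ℕ | T p.1 p.2 = a + 1}.Nonempty := ⟨(i, j), hTa⟩
  have hfin : {p : ℕ × ℕ | T p.1 p.2 = a + 1}.Finite :=
    (cells_finite hν).subset (cnt_subset_cells hT a)
  have : 0 < {p : ℕ × ℕ | T p.1 p.2 = a + 1}.ncard := (Set.ncard_pos hfin).mpr hne
  rw [hc a, hβ a ham] at this
  omega

/-- the shape of the sub-tableau of entries `< m`. -/
def kap (m : ℕ) (ν : ℕ → ℕ) (T : ℕ → ℕ → ℕ) : ℕ → ℕ :=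
  fun i => {j : ℕ | j < ν i ∧ T i j < m}.ncard

/-- the sub-tableau of entries `< m`. -/
def low (m : ℕ) (ν : ℕ → ℕ) (T : ℕ → ℕ → ℕ) : ℕ → ℕ → ℕ :=
  fun i j => if j < kap m ν T i then T i j else 0

/-- reconstruction of a tableau from its sub-tableau of entries `< m`. -/
def recon (m : ℕ) (ν κ : ℕ → ℕ) (T' : ℕ → ℕ → ℕ) : ℕ → ℕ → ℕ :=
  fun i j => if j < κ i then T' i j else if j < ν i then m else 0

lemma kchar (hT : IsSSYT ν T) (i j : ℕ) :
    j < kap m ν T i ↔ j < ν i ∧ T i j < m := by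
  rw [show kap m ν T i = {j : ℕ | j < ν i ∧ T i j < m}.ncard from rfl]
  rw [← mem_iff_lt_ncard ((Set.finite_Iio (ν i)).subset (fun j hj => hj.1))
    (fun j k hj hkj => by
      obtain ⟨h1, h2⟩ := hj
      refine ⟨by omega, ?_⟩
      have := hT.2.1 i k j hkj h1
      omega)]
  rfl

end tab

section decomp

variable {ν β : ℕ → ℕ} {T : ℕ → ℕ → ℕ} {m : ℕ}
variable (hm : 1 ≤ m) (hν : IsPartitionF ν) (hT : IsSSYT ν T)
variable (hc : ∀ a, {p : ℕ × ℕ | T p.1 p.2 = a + 1}.ncard = β a)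
variable (hβ : ∀ a, m ≤ a → β a = 0)

include hν hT hc hβ

lemma kap_le (i : ℕ) : kap m ν T i ≤ ν i :=
  le_of_lt_imp (fun j hj => ((kchar hT i j).mp hj).1)

lemma kap_strip (i : ℕ) : ν (i + 1) ≤ kap m ν T i := by
  apply le_of_lt_imp
  intro j hj
  rw [kchar hT]
  have hji : j < ν i := lt_of_lt_of_le hj (hν.1 i (i + 1) (by omega))
  refine ⟨hji, ?_⟩
  have hcol := hT.2.2 i (i + 1) j (by omega) hj
  have hle := entry_le hν hT hc hβ hj
  omega

lemma kap_part : IsPartitionF (kap m ν T) := by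
  constructor
  · intro i k hik
    apply le_of_lt_imp
    intro j hj
    rw [kchar hT] at hj ⊢
    obtain ⟨hjk, hTk⟩ := hj
    have hji : j < ν i := lt_of_lt_of_le hjk (hν.1 i k hik)
    refine ⟨hji, ?_⟩
    rcases Nat.eq_or_lt_of_le hik with h | h
    · rw [h]; exact hTk
    · have := hT.2.2 i k j h hjk
      omega
  · apply hν.2.subset
    intro i hi
    simp only [Function.mem_support] at hi ⊢
    have := kap_le hν hT hc hβ (m := m) i
    omega

lemma low_ssyt : IsSSYT (kap m ν T) (low m ν T) := by
  refine ⟨?_, ?_, ?_⟩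
  · intro i j
    unfold low
    constructor
    · intro h
      by_contra hc2
      simp only [if_neg hc2] at h
      exact h rfl
    · intro h
      rw [if_pos h]
      have := entry_pos hT ((kchar hT i j).mp h).1
      omega
  · intro i j k hjk hk
    unfold low
    have hj : j < kap m ν T i := by omega
    rw [if_pos hj, if_pos hk]
    exact hT.2.1 i j k hjk ((kchar hT i k).mp hk).1
  · intro i k j hik hj
    unfold low
    have hjk := (kchar hT k j).mp hj
    have hji : j < kap m ν T i := by
      rw [kchar hT]
      have hνki : j < ν i := lt_of_lt_of_le hjk.1 (hν.1 i k (by omega))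
      have := hT.2.2 i k j hik hjk.1
      exact ⟨hνki, by omega⟩
    rw [if_pos hj, if_pos hji]
    exact hT.2.2 i k j hik hjk.1

include hm in
lemma low_cnt (a : ℕ) :
    {p : ℕ × ℕ | low m ν T p.1 p.2 = a + 1}.ncard = (if a = m - 1 then 0 else β a) := by
  by_cases ha : a = m - 1
  · rw [if_pos ha]
    have : {p : ℕ × ℕ | low m ν T p.1 p.2 = a + 1} = ∅ := by
      ext p
      simp only [Set.mem_setOf_eq, Set.mem_empty_iff_false, iff_false]
      intro hp
      unfold low at hp
      by_cases h : p.2 < kap m ν T p.1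
      · rw [if_pos h] at hp
        have := ((kchar hT p.1 p.2).mp h).2
        omega
      · rw [if_neg h] at hp
        omega
    rw [this, Set.ncard_empty]
  · rw [if_neg ha]
    by_cases ham : m ≤ a
    · rw [hβ a ham]
      have : {p : ℕ × ℕ | low m ν T p.1 p.2 = a + 1} = ∅ := by
        ext p
        simp only [Set.mem_setOf_eq, Set.mem_empty_iff_false, iff_false]
        intro hp
        unfold low at hp
        by_cases h : p.2 < kap m ν T p.1
        · rw [if_pos h] at hp
          have := ((kchar hT p.1 p.2).mp h).2
          omega
        · rw [if_neg h] at hp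
          omega
      rw [this, Set.ncard_empty]
    · have ham' : a + 1 < m := by omega
      rw [← hc a]
      congr 1
      ext p
      simp only [Set.mem_setOf_eq]
      unfold low
      by_cases h : p.2 < kap m ν T p.1
      · rw [if_pos h]
      · rw [if_neg h]
        constructor
        · intro hp; omega
        · intro hp
          exfalso
          have hcell : p.2 < ν p.1 := (hT.1 p.1 p.2).mp (by omega)
          have : p.2 < kap m ν T p.1 := (kchar hT p.1 p.2).mpr ⟨hcell, by omega⟩
          exact h this

include hm in
lemma kap_wt : wt ν = wt (kap m ν T) + β (m - 1) := by
  have hsub : cells (kap m ν T) ⊆ cells ν := by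
    intro p hp
    have : p.2 < kap m ν T p.1 := hp
    exact ((kchar hT p.1 p.2).mp this).1
  have hdiff : cells ν \ cells (kap m ν T) = {p : ℕ × ℕ | T p.1 p.2 = (m - 1) + 1} := by
    ext p
    simp only [Set.mem_diff, cells, Set.mem_setOf_eq]
    constructor
    · rintro ⟨h1, h2⟩
      have hTm : ¬ T p.1 p.2 < m := fun hlt => h2 ((kchar hT p.1 p.2).mpr ⟨h1, hlt⟩)
      have := entry_le hν hT hc hβ h1
      omega
    · intro hp
      have h1 : p.2 < ν p.1 := (hT.1 p.1 p.2).mp (by omega)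
      refine ⟨h1, fun h2 => ?_⟩
      have := ((kchar hT p.1 p.2).mp h2).2
      omega
  have hd := Set.ncard_diff hsub (cells_finite (kap_part hν hT hc hβ))
  rw [hdiff, hc (m - 1)] at hd
  rw [ncard_cells hν] at hd
  rw [ncard_cells (kap_part hν hT hc hβ)] at hd
  have hle : wt (kap m ν T) ≤ wt ν := by
    rw [← ncard_cells hν, ← ncard_cells (kap_part hν hT hc hβ)]
    exact Set.ncard_le_ncard hsub (cells_finite hν)
  omega

end decomp

section recon

variable {ν κ β : ℕ → ℕ} {T' : ℕ → ℕ → ℕ} {m : ℕ}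
variable (hm : 1 ≤ m) (hν : IsPartitionF ν) (hκ : IsPartitionF κ)
variable (hstrip : ∀ i, ν (i + 1) ≤ κ i ∧ κ i ≤ ν i)
variable (hT' : IsSSYT κ T')
variable (hc' : ∀ a, {p : ℕ × ℕ | T' p.1 p.2 = a + 1}.ncard = (if a = m - 1 then 0 else β a))
variable (hβ : ∀ a, m ≤ a → β a = 0)
variable (hwt : wt ν = wt κ + β (m - 1))

include hm hκ hT' hc' hβ in
lemma rT'_le {i j : ℕ} (hj : j < κ i) : T' i j ≤ m - 1 := by
  have hβ' : ∀ a, m - 1 ≤ a → (if a = m - 1 then 0 else β a) = 0 := by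
    intro a ha
    by_cases h : a = m - 1
    · rw [if_pos h]
    · rw [if_neg h]
      exact hβ a (by omega)
  exact entry_le hκ hT' hc' hβ' hj

include hm hν hκ hstrip hT' hc' hβ in
lemma recon_ssyt : IsSSYT ν (recon m ν κ T') := by
  refine ⟨?_, ?_, ?_⟩
  · intro i j
    unfold recon
    by_cases h1 : j < κ i
    · rw [if_pos h1]
      have h2 : j < ν i := lt_of_lt_of_le h1 (hstrip i).2
      have := entry_pos hT' h1
      constructor
      · intro _; exact h2
      · intro _; omega
    · rw [if_neg h1]
      by_cases h2 : j < ν i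
      · rw [if_pos h2]
        constructor
        · intro _; exact h2
        · intro _; omega
      · rw [if_neg h2]
        simp only [ne_eq, not_true_eq_false, false_iff]
        omega
  · intro i j k hjk hk
    unfold recon
    by_cases h1 : k < κ i
    · have h2 : j < κ i := by omega
      rw [if_pos h1, if_pos h2]
      exact hT'.2.1 i j k hjk h1
    · rw [if_neg h1, if_pos hk]
      by_cases h2 : j < κ i
      · rw [if_pos h2]
        have := rT'_le hm hκ hT' hc' hβ h2
        omega
      · rw [if_neg h2, if_pos (show j < ν i by omega)]
  · intro i k j hik hj
    unfold recon
    by_cases h1 : j < κ k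
    · have h2 : j < κ i := lt_of_lt_of_le h1 (hκ.1 i k (by omega))
      rw [if_pos h1, if_pos h2]
      exact hT'.2.2 i k j hik h1
    · rw [if_neg h1, if_pos hj]
      have h3 : j < κ i := by
        have h4 : ν k ≤ ν (i + 1) := hν.1 (i + 1) k (by omega)
        have h5 := (hstrip i).1
        omega
      rw [if_pos h3]
      have := rT'_le hm hκ hT' hc' hβ h3
      omega

include hm hν hκ hstrip hT' hc' hβ hwt in
lemma recon_cnt (a : ℕ) :
    {p : ℕ × ℕ | recon m ν κ T' p.1 p.2 = a + 1}.ncard = β a := by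
  have hsub : cells κ ⊆ cells ν := by
    intro p hp
    have : p.2 < κ p.1 := hp
    exact lt_of_lt_of_le this (hstrip p.1).2
  by_cases ha : a = m - 1
  · subst ha
    have hset : {p : ℕ × ℕ | recon m ν κ T' p.1 p.2 = (m - 1) + 1} = cells ν \ cells κ := by
      ext p
      simp only [Set.mem_setOf_eq, Set.mem_diff, cells]
      unfold recon
      by_cases h1 : p.2 < κ p.1
      · rw [if_pos h1]
        have := rT'_le hm hκ hT' hc' hβ h1
        constructor
        · intro h; omega
        · intro h; exact absurd h1 h.2
      · rw [if_neg h1]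
        by_cases h2 : p.2 < ν p.1
        · rw [if_pos h2]
          constructor
          · intro _; exact ⟨h2, h1⟩
          · intro _; omega
        · rw [if_neg h2]
          constructor
          · intro h; omega
          · intro h; exact absurd h.1 h2
    rw [hset, Set.ncard_diff hsub (cells_finite hκ), ncard_cells hν, ncard_cells hκ]
    omega
  · by_cases ham : m ≤ a
    · rw [hβ a ham]
      have hset : {p : ℕ × ℕ | recon m ν κ T' p.1 p.2 = a + 1} = ∅ := by
        ext p
        simp only [Set.mem_setOf_eq, Set.mem_empty_iff_false, iff_false]
        unfold recon
        by_cases h1 : p.2 < κ p.1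
        · rw [if_pos h1]
          have := rT'_le hm hκ hT' hc' hβ h1
          omega
        · rw [if_neg h1]
          by_cases h2 : p.2 < ν p.1
          · rw [if_pos h2]; omega
          · rw [if_neg h2]; omega
      rw [hset, Set.ncard_empty]
    · have ha' : a < m - 1 := by omega
      have hset : {p : ℕ × ℕ | recon m ν κ T' p.1 p.2 = a + 1} =
          {p : ℕ × ℕ | T' p.1 p.2 = a + 1} := by
        ext p
        simp only [Set.mem_setOf_eq]
        unfold recon
        by_cases h1 : p.2 < κ p.1
        · rw [if_pos h1]
        · rw [if_neg h1]
          have hT'0 : T' p.1 p.2 = 0 := by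
            by_contra h
            exact h1 ((hT'.1 p.1 p.2).mp h)
          by_cases h2 : p.2 < ν p.1
          · rw [if_pos h2]
            omega
          · rw [if_neg h2]
            omega
      rw [hset, hc' a, if_neg ha]

include hm hν hκ hstrip hT' hc' hβ in
lemma recon_kap : kap m ν (recon m ν κ T') = κ := by
  have hssyt := recon_ssyt hm hν hκ hstrip hT' hc' hβ
  funext i
  have hset : ∀ j, j < kap m ν (recon m ν κ T') i ↔ j < κ i := by
    intro j
    rw [kchar hssyt]
    constructor
    · rintro ⟨h1, h2⟩
      by_contra h3
      unfold recon at h2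
      rw [if_neg h3, if_pos h1] at h2
      omega
    · intro h1
      have h2 : j < ν i := lt_of_lt_of_le h1 (hstrip i).2
      refine ⟨h2, ?_⟩
      unfold recon
      rw [if_pos h1]
      have := rT'_le hm hκ hT' hc' hβ h1
      omega
  by_cases h : kap m ν (recon m ν κ T') i ≤ κ i
  · rcases Nat.eq_or_lt_of_le h with h' | h'
    · exact h'
    · have := (hset (kap m ν (recon m ν κ T') i)).mpr h'
      omega
  · have := (hset (κ i)).mp (by omega)
    omega

include hm hν hκ hstrip hT' hc' hβ in
lemma recon_low : low m ν (recon m ν κ T') = T' := by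
  funext i j
  unfold low
  rw [recon_kap hm hν hκ hstrip hT' hc' hβ]
  by_cases h1 : j < κ i
  · rw [if_pos h1]
    unfold recon
    rw [if_pos h1]
  · rw [if_neg h1]
    by_contra h
    have : T' i j ≠ 0 := fun h0 => h h0.symm
    exact h1 ((hT'.1 i j).mp this)

end recon

section backdecomp

variable {ν β : ℕ → ℕ} {T : ℕ → ℕ → ℕ} {m : ℕ}
variable (hm : 1 ≤ m) (hν : IsPartitionF ν) (hT : IsSSYT ν T)
variable (hc : ∀ a, {p : ℕ × ℕ | T p.1 p.2 = a + 1}.ncard = β a)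
variable (hβ : ∀ a, m ≤ a → β a = 0)

include hν hT hc hβ in
lemma low_recon : recon m ν (kap m ν T) (low m ν T) = T := by
  funext i j
  unfold recon low
  by_cases h1 : j < kap m ν T i
  · rw [if_pos h1, if_pos h1]
  · rw [if_neg h1]
    by_cases h2 : j < ν i
    · rw [if_pos h2]
      have h3 : ¬ (j < ν i ∧ T i j < m) := fun hand => h1 ((kchar hT i j).mpr hand)
      have h4 : m ≤ T i j := by
        rcases Nat.lt_or_ge (T i j) m with h | h
        · exact absurd ⟨h2, h⟩ h3
        · exact h
      have := entry_le hν hT hc hβ h2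
      omega
    · rw [if_neg h2]
      by_contra h
      have : T i j ≠ 0 := fun h0 => h h0.symm
      exact h2 ((hT.1 i j).mp this)

end backdecomp

/-- SSYT sets are finite. -/
lemma ssyt_finite {ν β : ℕ → ℕ} {m : ℕ} (hν : IsPartitionF ν)
    (hβ : ∀ a, m ≤ a → β a = 0) :
    {T : ℕ → ℕ → ℕ | IsSSYT ν T ∧
      ∀ a, {p : ℕ × ℕ | T p.1 p.2 = a + 1}.ncard = β a}.Finite := by
  set S := {T : ℕ → ℕ → ℕ | IsSSYT ν T ∧
      ∀ a, {p : ℕ × ℕ | T p.1 p.2 = a + 1}.ncard = β a} with hS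
  have hinj : Set.InjOn
      (fun (T : ℕ → ℕ → ℕ) => fun p : Fin (wt ν) × Fin (wt ν) =>
        (⟨min (T p.1.1 p.2.1) m, by omega⟩ : Fin (m + 1))) S := by
    intro T hTmem U hUmem hTU
    simp only [hS, Set.mem_setOf_eq] at hTmem hUmem
    obtain ⟨hT, hcT⟩ := hTmem
    obtain ⟨hU, hcU⟩ := hUmem
    funext i j
    by_cases hcell : j < ν i
    · have hi : i < wt ν := lt_wt_of_part hν (by omega)
      have hj : j < wt ν := by
        have := le_wt hν.2 i
        omega
      have h1 := congrFun hTU (⟨i, hi⟩, ⟨j, hj⟩)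
      simp only [Fin.mk.injEq] at h1
      have h2 := entry_le hν hT hcT hβ hcell
      have h3 := entry_le hν hU hcU hβ hcell
      omega
    · have h1 : T i j = 0 := by
        by_contra h
        exact hcell ((hT.1 i j).mp h)
      have h2 : U i j = 0 := by
        by_contra h
        exact hcell ((hU.1 i j).mp h)
      rw [h1, h2]
  exact Set.Finite.of_finite_image (Set.toFinite _) hinj

/-- The set of possible shapes in the branching rule. -/
def strips (ν β : ℕ → ℕ) (m : ℕ) : Set (ℕ → ℕ) :=
  {κ | IsPartitionF κ ∧ (∀ i, ν (i + 1) ≤ κ i ∧ κ i ≤ ν i) ∧ wt ν = wt κ + β (m - 1)}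

lemma strips_finite (ν β : ℕ → ℕ) (m : ℕ) : (strips ν β m).Finite := by
  apply (finite_partitions (wt ν - β (m - 1))).subset
  rintro κ ⟨h1, _h2, h3⟩
  exact ⟨h1, by omega⟩

/-- The branching rule for Kostka numbers: removing the largest letter `m`. -/
theorem kostka_branch {ν β : ℕ → ℕ} {m : ℕ} (hm : 1 ≤ m) (hν : IsPartitionF ν)
    (hβ : ∀ a, m ≤ a → β a = 0) :
    kostkaNum ν β = ∑ᶠ κ, (if κ ∈ strips ν β m then
      kostkaNum κ (fun a => if a = m - 1 then 0 else β a) else 0) := by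
  have hSfin := strips_finite ν β m
  rw [finsum_eq_finset_sum_of_support_subset _ (s := hSfin.toFinset) (by
    intro κ hκ
    simp only [Function.mem_support, ne_eq, ite_eq_right_iff, not_forall] at hκ
    simp only [Set.Finite.coe_toFinset]
    exact hκ.choose)]
  -- identify both sides with cardinalities
  have hβ' : ∀ a, m ≤ a → (if a = m - 1 then 0 else β a) = 0 := by
    intro a ha
    by_cases h : a = m - 1
    · rw [if_pos h]
    · rw [if_neg h]; exact hβ a ha
  classical
  haveI : Fintype ↥(strips ν β m) := hSfin.fintype
  haveI : ∀ κ : ↥(strips ν β m), Fintype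
      {T' : ℕ → ℕ → ℕ // IsSSYT κ.1 T' ∧
        ∀ a, {p : ℕ × ℕ | T' p.1 p.2 = a + 1}.ncard = (if a = m - 1 then 0 else β a)} :=
    fun κ => (ssyt_finite κ.2.1 hβ').fintype
  -- the equivalence
  have E : {T : ℕ → ℕ → ℕ // IsSSYT ν T ∧
      ∀ a, {p : ℕ × ℕ | T p.1 p.2 = a + 1}.ncard = β a} ≃
      Σ κ : ↥(strips ν β m),
        {T' : ℕ → ℕ → ℕ // IsSSYT κ.1 T' ∧
          ∀ a, {p : ℕ × ℕ | T' p.1 p.2 = a + 1}.ncard = (if a = m - 1 then 0 else β a)} := by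
    refine ⟨fun T => ⟨⟨kap m ν T.1, kap_part hν T.2.1 T.2.2 hβ,
        fun i => ⟨kap_strip hν T.2.1 T.2.2 hβ i, kap_le hν T.2.1 T.2.2 hβ i⟩,
        kap_wt hm hν T.2.1 T.2.2 hβ⟩,
      ⟨low m ν T.1, low_ssyt hν T.2.1 T.2.2 hβ, low_cnt hm hν T.2.1 T.2.2 hβ⟩⟩,
      fun p => ⟨recon m ν p.1.1 p.2.1,
        recon_ssyt hm hν p.1.2.1 p.1.2.2.1 p.2.2.1 p.2.2.2 hβ,
        recon_cnt hm hν p.1.2.1 p.1.2.2.1 p.2.2.1 p.2.2.2 hβ p.1.2.2.2⟩,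
      ?_, ?_⟩
    · intro T
      exact Subtype.ext (low_recon hν T.2.1 T.2.2 hβ)
    · rintro ⟨⟨κ, hκ⟩, ⟨T', hT'⟩⟩
      have h1 : kap m ν (recon m ν κ T') = κ :=
        recon_kap hm hν hκ.1 hκ.2.1 hT'.1 hT'.2 hβ
      have h2 : low m ν (recon m ν κ T') = T' :=
        recon_low hm hν hκ.1 hκ.2.1 hT'.1 hT'.2 hβ
      refine Sigma.ext (Subtype.ext h1) ?_
      refine (Subtype.heq_iff_coe_eq ?_).mpr h2
      intro T''
      show (IsSSYT (kap m ν (recon m ν κ T')) T'' ∧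
          ∀ a, {p : ℕ × ℕ | T'' p.1 p.2 = a + 1}.ncard = (if a = m - 1 then 0 else β a)) ↔
        (IsSSYT κ T'' ∧
          ∀ a, {p : ℕ × ℕ | T'' p.1 p.2 = a + 1}.ncard = (if a = m - 1 then 0 else β a))
      rw [h1]
  rw [show kostkaNum ν β = Nat.card {T : ℕ → ℕ → ℕ // IsSSYT ν T ∧
      ∀ a, {p : ℕ × ℕ | T p.1 p.2 = a + 1}.ncard = β a} from if_pos hν]
  rw [Nat.card_congr E, Nat.card_eq_fintype_card, Fintype.card_sigma]
  have hstep : ∀ κ : ↥(strips ν β m),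
      Fintype.card {T' : ℕ → ℕ → ℕ // IsSSYT κ.1 T' ∧
        ∀ a, {p : ℕ × ℕ | T' p.1 p.2 = a + 1}.ncard = (if a = m - 1 then 0 else β a)} =
      (if (κ : ℕ → ℕ) ∈ strips ν β m then
        kostkaNum κ.1 (fun a => if a = m - 1 then 0 else β a) else 0) := by
    intro κ
    rw [if_pos κ.2]
    rw [show kostkaNum κ.1 (fun a => if a = m - 1 then 0 else β a) =
      Nat.card {T' : ℕ → ℕ → ℕ // IsSSYT κ.1 T' ∧
        ∀ a, {p : ℕ × ℕ | T' p.1 p.2 = a + 1}.ncard = (if a = m - 1 then 0 else β a)}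
      from if_pos κ.2.1]
    rw [Nat.card_eq_fintype_card]
  rw [Finset.sum_congr rfl (fun κ _ => hstep κ)]
  exact (Finset.sum_subtype (p := fun κ => κ ∈ strips ν β m) hSfin.toFinset
    (fun κ => hSfin.mem_toFinset) (fun κ => if κ ∈ strips ν β m then
      kostkaNum κ (fun a => if a = m - 1 then 0 else β a) else 0)).symm

/-- base case: Kostka number with empty content. -/
lemma kostka_empty {ν β : ℕ → ℕ} (hν : IsPartitionF ν) (hβ : ∀ a, β a = 0) :
    kostkaNum ν β = if (∀ i, ν i = 0) then 1 else 0 := by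
  rw [show kostkaNum ν β = Nat.card {T : ℕ → ℕ → ℕ // IsSSYT ν T ∧
      ∀ a, {p : ℕ × ℕ | T p.1 p.2 = a + 1}.ncard = β a} from if_pos hν]
  by_cases hzero : ∀ i, ν i = 0
  · rw [if_pos hzero]
    have hmem : IsSSYT ν (fun _ _ => 0) ∧
        ∀ a, {p : ℕ × ℕ | (fun _ _ => (0:ℕ)) p.1 p.2 = a + 1}.ncard = β a := by
      refine ⟨⟨?_, ?_, ?_⟩, ?_⟩
      · intro i j
        rw [hzero i]
        simp
      · intro i j k _ _
        exact le_refl 0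
      · intro i k j _ hj
        rw [hzero k] at hj
        omega
      · intro a
        rw [hβ a]
        convert Set.ncard_empty (ℕ × ℕ)
        ext p
        simp
    haveI : Unique {T : ℕ → ℕ → ℕ // IsSSYT ν T ∧
        ∀ a, {p : ℕ × ℕ | T p.1 p.2 = a + 1}.ncard = β a} := by
      refine ⟨⟨⟨fun _ _ => 0, hmem⟩⟩, ?_⟩
      rintro ⟨T, hT, _⟩
      apply Subtype.ext
      funext i j
      show T i j = 0
      by_contra h
      have := (hT.1 i j).mp h
      rw [hzero i] at this
      omega
    exact Nat.card_unique
  · rw [if_neg hzero]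
    push_neg at hzero
    obtain ⟨i, hi⟩ := hzero
    haveI : IsEmpty {T : ℕ → ℕ → ℕ // IsSSYT ν T ∧
        ∀ a, {p : ℕ × ℕ | T p.1 p.2 = a + 1}.ncard = β a} := by
      refine ⟨?_⟩
      rintro ⟨T, hT, hcT⟩
      have hcell : (0:ℕ) < ν i := by omega
      have h1 := entry_pos hT hcell
      set a := T i 0 - 1 with ha
      have hTa : T i 0 = a + 1 := by omega
      have hne : {p : ℕ × ℕ | T p.1 p.2 = a + 1}.Nonempty := ⟨(i, 0), hTa⟩
      have hfin : {p : ℕ × ℕ | T p.1 p.2 = a + 1}.Finite :=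
        (cells_finite hν).subset (cnt_subset_cells hT a)
      have hpos := (Set.ncard_pos hfin).mpr hne
      rw [hcT a, hβ a] at hpos
      omega
    exact Nat.card_of_isEmpty


end
section
open Equiv Equiv.Perm



lemma succAbove_val {n' : ℕ} (j : Fin (n' + 1)) (k : Fin n') :
    (j.succAbove k).1 = if k.1 < j.1 then k.1 else k.1 + 1 := by
  by_cases h : Fin.castSucc k < j
  · rw [Fin.succAbove_of_castSucc_lt _ _ h, if_pos (by exact h)]
    rfl
  · rw [Fin.succAbove_of_le_castSucc _ _ (le_of_not_gt h), if_neg (by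
      intro hk
      exact h (by exact hk))]
    rfl

/-- the permutation of `Fin (n'+1)` sending `last` to `j` and `castSucc k` to
`j.succAbove k`. -/
def dperm {n' : ℕ} (j : Fin (n' + 1)) : Equiv.Perm (Fin (n' + 1)) :=
  (Fin.revPerm.trans (Fin.cycleRange j.rev).symm).trans Fin.revPerm

lemma dperm_last {n' : ℕ} (j : Fin (n' + 1)) : dperm j (Fin.last n') = j := by
  unfold dperm
  simp only [Equiv.trans_apply, Fin.revPerm_apply, Fin.rev_last,
    Fin.cycleRange_symm_zero, Fin.rev_rev]

lemma dperm_castSucc {n' : ℕ} (j : Fin (n' + 1)) (k : Fin n') :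
    dperm j (Fin.castSucc k) = j.succAbove k := by
  unfold dperm
  simp only [Equiv.trans_apply, Fin.revPerm_apply, Fin.rev_castSucc,
    Fin.cycleRange_symm_succ]
  rw [Fin.rev_succAbove, Fin.rev_rev, Fin.rev_rev]

lemma sign_dperm {n' : ℕ} (j : Fin (n' + 1)) :
    Equiv.Perm.sign (dperm j) = (-1 : ℤˣ) ^ (n' - j.1) := by
  unfold dperm
  have h1 : (Fin.revPerm.trans (Fin.cycleRange j.rev).symm).trans Fin.revPerm =
      Fin.revPerm * (Fin.cycleRange j.rev).symm * Fin.revPerm := rfl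
  rw [h1, Equiv.Perm.sign_mul, Equiv.Perm.sign_mul]
  have h2 : Equiv.Perm.sign (Fin.cycleRange j.rev).symm =
      Equiv.Perm.sign (Fin.cycleRange j.rev) := Equiv.Perm.sign_symm _
  rw [h2, Fin.sign_cycleRange]
  have h3 : (j.rev : ℕ) = n' - j.1 := by
    rw [Fin.val_rev]
    omega
  rw [h3]
  have : ∀ u v : ℤˣ, u * v * u = v := by
    intro u v
    rw [mul_comm u v, mul_assoc, Int.units_mul_self, mul_one]
  rw [this]

/-- extension of a permutation of `Fin n'` to `Fin (n'+1)` fixing `last`. -/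
def extPerm {n' : ℕ} (τ : Equiv.Perm (Fin n')) : Equiv.Perm (Fin (n' + 1)) :=
  (finSuccEquivLast.symm).permCongr τ.optionCongr

lemma extPerm_last {n' : ℕ} (τ : Equiv.Perm (Fin n')) :
    extPerm τ (Fin.last n') = Fin.last n' := by
  unfold extPerm
  simp only [Equiv.permCongr_apply, Equiv.symm_symm, finSuccEquivLast_last,
    Equiv.optionCongr_apply, Option.map_none, finSuccEquivLast_symm_none]

lemma extPerm_castSucc {n' : ℕ} (τ : Equiv.Perm (Fin n')) (i : Fin n') :
    extPerm τ (Fin.castSucc i) = Fin.castSucc (τ i) := by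
  unfold extPerm
  simp only [Equiv.permCongr_apply, Equiv.symm_symm, finSuccEquivLast_castSucc,
    Equiv.optionCongr_apply, Option.map_some, finSuccEquivLast_symm_some]

lemma sign_extPerm {n' : ℕ} (τ : Equiv.Perm (Fin n')) :
    Equiv.Perm.sign (extPerm τ) = Equiv.Perm.sign τ := by
  unfold extPerm
  rw [Equiv.Perm.sign_permCongr, Equiv.optionCongr_sign]

/-- the decomposition map. -/
def Emap {n' : ℕ} (p : Fin (n' + 1) × Equiv.Perm (Fin n')) : Equiv.Perm (Fin (n' + 1)) :=
  (extPerm p.2).trans (dperm p.1)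

lemma Emap_last {n' : ℕ} (p : Fin (n' + 1) × Equiv.Perm (Fin n')) :
    Emap p (Fin.last n') = p.1 := by
  unfold Emap
  rw [Equiv.trans_apply, extPerm_last, dperm_last]

lemma Emap_castSucc {n' : ℕ} (p : Fin (n' + 1) × Equiv.Perm (Fin n')) (i : Fin n') :
    Emap p (Fin.castSucc i) = p.1.succAbove (p.2 i) := by
  unfold Emap
  rw [Equiv.trans_apply, extPerm_castSucc, dperm_castSucc]

lemma sign_Emap {n' : ℕ} (p : Fin (n' + 1) × Equiv.Perm (Fin n')) :
    Equiv.Perm.sign (Emap p) = (-1 : ℤˣ) ^ (n' - p.1.1) * Equiv.Perm.sign p.2 := by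
  unfold Emap
  have h1 : (extPerm p.2).trans (dperm p.1) = dperm p.1 * extPerm p.2 := rfl
  rw [h1, Equiv.Perm.sign_mul, sign_dperm, sign_extPerm]

lemma Emap_bijective (n' : ℕ) : Function.Bijective (Emap (n' := n')) := by
  rw [Fintype.bijective_iff_injective_and_card]
  constructor
  · intro p q hpq
    have hj : p.1 = q.1 := by
      rw [← Emap_last p, ← Emap_last q, hpq]
    have hτ : p.2 = q.2 := by
      apply Equiv.ext
      intro i
      have h1 : Emap p (Fin.castSucc i) = Emap q (Fin.castSucc i) := by rw [hpq]
      rw [Emap_castSucc p i, Emap_castSucc q i, hj] at h1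
      exact Fin.succAbove_right_injective h1
    exact Prod.ext hj hτ
  · rw [Fintype.card_prod, Fintype.card_perm, Fintype.card_perm,
      Fintype.card_fin, Fintype.card_fin, Nat.factorial_succ]


end
section
open Equiv Equiv.Perm



/-- ℕ-version of an integer vector (0 outside, junk if negative). -/
def natC {n : ℕ} (c : Fin n → ℤ) : ℕ → ℕ :=
  fun a => if h : a < n then (c ⟨a, h⟩).toNat else 0

/-- Kostka number with ℤ-content; `0` if any entry is negative. -/
def KZ {n : ℕ} (ν : ℕ → ℕ) (c : Fin n → ℤ) : ℤ :=
  if ∀ i, 0 ≤ c i then (kostkaNum ν (natC c) : ℤ) else 0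

/-- the content vector `σ(ρ+δ) - δ`. -/
def cvec (n : ℕ) (ρ : Fin n → ℤ) (σ : Equiv.Perm (Fin n)) : Fin n → ℤ :=
  fun i => ρ (σ i) + ((n : ℤ) - 1 - ((σ i).1 : ℤ)) - ((n : ℤ) - 1 - (i.1 : ℤ))

/-- the signed Kostka sum. -/
def Gsum (n : ℕ) (ν : ℕ → ℕ) (ρ : Fin n → ℤ) : ℤ :=
  ∑ σ : Equiv.Perm (Fin n), ((Equiv.Perm.sign σ : ℤˣ) : ℤ) * KZ ν (cvec n ρ σ)

/-- the deleted and shifted `ρ`-vector. -/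
def rhoD {n' : ℕ} (j : Fin (n' + 1)) (ρ : Fin (n' + 1) → ℤ) : Fin n' → ℤ :=
  fun k => ρ (j.succAbove k) - (if k.1 < j.1 then 0 else 1)

/-- the shape sets in the ℤ-branching. -/
def SZ (n' : ℕ) (ν : ℕ → ℕ) (w : ℤ) : Set (ℕ → ℕ) :=
  {κ | IsPartitionF κ ∧ (∀ i, ν (i + 1) ≤ κ i ∧ κ i ≤ ν i) ∧
    (wt ν : ℤ) = (wt κ : ℤ) + w}

lemma SZ_finite (n' : ℕ) (ν : ℕ → ℕ) (w : ℤ) : (SZ n' ν w).Finite := by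
  apply (finite_partitions ((wt ν : ℤ) - w).toNat).subset
  rintro κ ⟨h1, _h2, h3⟩
  exact ⟨h1, by omega⟩

lemma rhoD_antitone {n' : ℕ} (j : Fin (n' + 1)) (ρ : Fin (n' + 1) → ℤ)
    (hρ : ∀ i j : Fin (n' + 1), i ≤ j → ρ j ≤ ρ i) :
    ∀ k l : Fin n', k ≤ l → rhoD j ρ l ≤ rhoD j ρ k := by
  intro k l hkl
  unfold rhoD
  have hkl' : k.1 ≤ l.1 := hkl
  have hmono : (j.succAbove k).1 ≤ (j.succAbove l).1 := by
    rw [succAbove_val, succAbove_val]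
    split_ifs <;> omega
  have hρ' : ρ (j.succAbove l) ≤ ρ (j.succAbove k) :=
    hρ _ _ (by rwa [Fin.le_def])
  split_ifs with h1 h2 h2 <;> omega

lemma natC_partition {n : ℕ} (c : Fin n → ℤ)
    (hc : ∀ i j : Fin n, i ≤ j → c j ≤ c i) : IsPartitionF (natC c) := by
  constructor
  · intro i j hij
    unfold natC
    split_ifs with h1 h2 h2
    · have := hc ⟨i, h2⟩ ⟨j, h1⟩ (by simpa using hij)
      omega
    · omega
    · omega
    · omega
  · apply (Set.finite_Iio n).subset
    intro i hi
    simp only [Function.mem_support] at hi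
    simp only [Set.mem_Iio]
    by_contra h
    exact hi (dif_neg (by omega))

lemma cvec_Emap_last {n' : ℕ} (ρ : Fin (n' + 1) → ℤ) (p : Fin (n' + 1) × Equiv.Perm (Fin n')) :
    cvec (n' + 1) ρ (Emap p) (Fin.last n') = ρ p.1 + ((n' : ℤ) - p.1.1) := by
  unfold cvec
  rw [Emap_last]
  have : ((Fin.last n' : Fin (n' + 1)).1 : ℤ) = (n' : ℤ) := by
    simp [Fin.last]
  rw [this]
  ring

lemma cvec_Emap_castSucc {n' : ℕ} (ρ : Fin (n' + 1) → ℤ)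
    (j : Fin (n' + 1)) (τ : Equiv.Perm (Fin n')) (i : Fin n') :
    cvec (n' + 1) ρ (Emap (j, τ)) (Fin.castSucc i) = cvec n' (rhoD j ρ) τ i := by
  unfold cvec rhoD
  rw [Emap_castSucc]
  have hval : ((j.succAbove (τ i)).1 : ℤ) =
      if (τ i).1 < j.1 then ((τ i).1 : ℤ) else ((τ i).1 : ℤ) + 1 := by
    rw [succAbove_val]
    split_ifs <;> simp
  have hcs : ((Fin.castSucc i).1 : ℤ) = (i.1 : ℤ) := by simp
  rw [hval, hcs]
  split_ifs <;> push_cast <;> ring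

/-- branching for the ℤ-indexed Kostka numbers. -/
lemma KZ_branch {n' : ℕ} {ν : ℕ → ℕ} (hν : IsPartitionF ν)
    (ρ : Fin (n' + 1) → ℤ) (j : Fin (n' + 1)) (τ : Equiv.Perm (Fin n')) :
    KZ ν (cvec (n' + 1) ρ (Emap (j, τ))) =
    ∑ᶠ κ, (if κ ∈ SZ n' ν (ρ j + ((n' : ℤ) - j.1)) then
      KZ κ (cvec n' (rhoD j ρ) τ) else 0) := by
  set c := cvec (n' + 1) ρ (Emap (j, τ)) with hc
  set c' := cvec n' (rhoD j ρ) τ with hc'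
  have hclast : c (Fin.last n') = ρ j + ((n' : ℤ) - j.1) := cvec_Emap_last ρ (j, τ)
  have hccs : ∀ i : Fin n', c (Fin.castSucc i) = c' i :=
    fun i => cvec_Emap_castSucc ρ j τ i
  by_cases hpos : ∀ i, 0 ≤ c i
  · rw [show KZ ν c = (kostkaNum ν (natC c) : ℤ) from if_pos hpos]
    have hβ : ∀ a, n' + 1 ≤ a → natC c a = 0 := fun a ha => dif_neg (by omega)
    rw [kostka_branch (le_add_self) hν hβ]
    have hβlast : natC c n' = (c (Fin.last n')).toNat := by
      unfold natC
      rw [dif_pos (Nat.lt_succ_self n')]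
      rfl
    have hmem : ∀ κ, κ ∈ strips ν (natC c) (n' + 1) ↔
        κ ∈ SZ n' ν (ρ j + ((n' : ℤ) - j.1)) := by
      intro κ
      unfold strips SZ
      simp only [Set.mem_setOf_eq, Nat.add_sub_cancel]
      constructor
      · rintro ⟨h1, h2, h3⟩
        refine ⟨h1, h2, ?_⟩
        rw [hβlast] at h3
        have := hpos (Fin.last n')
        omega
      · rintro ⟨h1, h2, h3⟩
        refine ⟨h1, h2, ?_⟩
        rw [hβlast]
        have := hpos (Fin.last n')
        omega
    have hpos' : ∀ i, 0 ≤ c' i := by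
      intro i
      rw [← hccs i]
      exact hpos _
    have htrunc : (fun a => if a = n' + 1 - 1 then 0 else natC c a) = natC c' := by
      funext a
      by_cases ha : a = n'
      · rw [if_pos (by omega), ha]
        unfold natC
        rw [dif_neg (by omega)]
      · rw [if_neg (by omega)]
        unfold natC
        by_cases ha' : a < n'
        · rw [dif_pos ha', dif_pos (by omega)]
          have : c ⟨a, by omega⟩ = c' ⟨a, ha'⟩ := by
            rw [← hccs ⟨a, ha'⟩]
            congr 1
          rw [this]
        · rw [dif_neg ha', dif_neg (by omega)]
    have hseteq : strips ν (natC c) (n' + 1) = SZ n' ν (ρ j + ((n' : ℤ) - j.1)) :=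
      Set.ext hmem
    set F := (strips_finite ν (natC c) (n' + 1)).toFinset with hF
    rw [finsum_eq_finset_sum_of_support_subset _ (s := F) (by
      intro κ hκ
      simp only [Function.mem_support, ne_eq, ite_eq_right_iff, not_forall] at hκ
      simp only [hF, Set.Finite.coe_toFinset]
      exact hκ.choose)]
    rw [finsum_eq_finset_sum_of_support_subset _ (s := F) (by
      intro κ hκ
      simp only [Function.mem_support, ne_eq, ite_eq_right_iff, not_forall] at hκ
      simp only [hF, Set.Finite.coe_toFinset, ← hseteq]
      exact (hmem κ).mpr hκ.choose)]
    push_cast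
    apply Finset.sum_congr rfl
    intro κ _
    by_cases hκ : κ ∈ SZ n' ν (ρ j + ((n' : ℤ) - j.1))
    · rw [if_pos ((hmem κ).mpr hκ), if_pos hκ]
      rw [show KZ κ c' = (kostkaNum κ (natC c') : ℤ) from if_pos hpos']
      norm_cast
      rw [show (fun a => if a = n' then 0 else natC c a) = natC c' from htrunc]
    · rw [if_neg (fun h => hκ ((hmem κ).mp h)), if_neg hκ]
  · rw [show KZ ν c = 0 from if_neg hpos]
    push_neg at hpos
    obtain ⟨i, hi⟩ := hpos
    symm
    apply finsum_eq_zero_of_forall_eq_zero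
    intro κ
    rcases Fin.eq_castSucc_or_eq_last i with ⟨i', rfl⟩ | rfl
    · rw [hccs i'] at hi
      have : KZ κ c' = 0 := if_neg (fun hall => by have := hall i'; omega)
      rw [this, ite_self]
    · rw [hclast] at hi
      by_cases hκmem : κ ∈ SZ n' ν (ρ j + ((n' : ℤ) - j.1))
      · exfalso
        obtain ⟨h1, h2, h3⟩ := hκmem
        have hwle : wt κ ≤ wt ν := wt_mono hν.2 (fun i => (h2 i).2)
        omega
      · rw [if_neg hκmem]


end
section
open Equiv Equiv.Perm Finset



lemma lemL (n' : ℕ) (ν : ℕ → ℕ) (hν : IsPartitionF ν) (ρ : Fin (n' + 1) → ℤ)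
    (hρ : ∀ i j : Fin (n' + 1), i ≤ j → ρ j ≤ ρ i) :
    (∑ j : Fin (n' + 1), (-1 : ℤ) ^ (n' - j.1) *
      (if ((∀ k, 0 ≤ rhoD j ρ k) ∧ natC (rhoD j ρ) ∈ SZ n' ν (ρ j + ((n' : ℤ) - j.1)))
        then 1 else 0)) =
    (if (∀ i : ℕ, (ν i : ℤ) = (if h : i < n' + 1 then ρ ⟨i, h⟩ else 0)) then 1 else 0) := by
  set R : ℕ → ℤ := fun i => if h : i < n' + 1 then ρ ⟨i, h⟩ else 0 with hR
  have hRval : ∀ x : Fin (n' + 1), R x.1 = ρ x := by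
    intro x
    simp only [hR]
    rw [dif_pos x.2]
  have hRmono : ∀ k l : ℕ, k ≤ l → l < n' + 1 → R l ≤ R k := by
    intro k l hkl hl
    have h := hρ ⟨k, by omega⟩ ⟨l, hl⟩ (by simp only [Fin.mk_le_mk]; omega)
    rw [← hRval ⟨k, by omega⟩, ← hRval ⟨l, hl⟩] at h
    exact h
  have hrhoDval : ∀ (j : Fin (n' + 1)) (k : Fin n'),
      rhoD j ρ k = if k.1 < j.1 then R k.1 else R (k.1 + 1) - 1 := by
    intro j k
    unfold rhoD
    rw [← hRval (j.succAbove k)]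
    by_cases h : k.1 < j.1
    · rw [if_pos h, if_pos h]
      have : (j.succAbove k).1 = k.1 := by rw [succAbove_val, if_pos h]
      rw [this]
      ring
    · rw [if_neg h, if_neg h]
      have : (j.succAbove k).1 = k.1 + 1 := by rw [succAbove_val, if_neg h]
      rw [this]
  set P : ℕ → Prop := fun k => ((ν (k + 1) : ℤ) ≤ R k ∧ R k ≤ (ν k : ℤ)) with hP
  set Q : ℕ → Prop := fun k => ((ν k : ℤ) + 1 ≤ R k ∧ R k ≤ (ν (k - 1) : ℤ) + 1) with hQ
  set Cn : ℕ → Prop := fun jv =>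
    (∀ i, n' + 1 ≤ i → ν i = 0) ∧ (∑ k ∈ Finset.range (n' + 1), R k = (wt ν : ℤ)) ∧
    (∀ k, k < jv → P k) ∧ (∀ k, jv < k → k < n' + 1 → Q k) with hCn
  -- the sum bookkeeping identity
  have sumRhoD : ∀ j : Fin (n' + 1),
      (∑ i ∈ Finset.range n', (if i < j.1 then R i else R (i + 1) - 1)) +
        (ρ j + ((n' : ℤ) - j.1)) = ∑ k ∈ Finset.range (n' + 1), R k := by
    intro j
    have hj : j.1 ≤ n' := by omega
    rw [Finset.range_eq_Ico, ← Finset.sum_Ico_consecutive _ (Nat.zero_le j.1) hj]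
    have h1 : ∑ i ∈ Finset.Ico 0 j.1, (if i < j.1 then R i else R (i + 1) - 1) =
        ∑ i ∈ Finset.Ico 0 j.1, R i := by
      apply Finset.sum_congr rfl
      intro i hi
      simp only [Finset.mem_Ico] at hi
      rw [if_pos hi.2]
    have h2 : ∑ i ∈ Finset.Ico j.1 n', (if i < j.1 then R i else R (i + 1) - 1) =
        (∑ i ∈ Finset.Ico j.1 n', R (i + 1)) - ((n' : ℤ) - j.1) := by
      rw [show (∑ i ∈ Finset.Ico j.1 n', (if i < j.1 then R i else R (i + 1) - 1)) =
          ∑ i ∈ Finset.Ico j.1 n', (R (i + 1) - 1) from Finset.sum_congr rfl (fun i hi => by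
        simp only [Finset.mem_Ico] at hi
        rw [if_neg (by omega)])]
      rw [Finset.sum_sub_distrib, Finset.sum_const, Nat.card_Ico, nsmul_eq_mul, mul_one,
        Nat.cast_sub hj]
    have h3 : ∑ i ∈ Finset.Ico j.1 n', R (i + 1) =
        ∑ k ∈ Finset.Ico (j.1 + 1) (n' + 1), R k := by
      rw [Finset.sum_Ico_eq_sum_range, Finset.sum_Ico_eq_sum_range]
      have hc : n' - j.1 = n' + 1 - (j.1 + 1) := by omega
      rw [← hc]
      apply Finset.sum_congr rfl
      intro i _
      congr 1
      omega
    have h4 : ∑ k ∈ Finset.Ico 0 (n' + 1), R k =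
        (∑ i ∈ Finset.Ico 0 j.1, R i) + (R j.1 +
          ∑ k ∈ Finset.Ico (j.1 + 1) (n' + 1), R k) := by
      rw [← Finset.sum_Ico_consecutive _ (Nat.zero_le j.1) (by omega : j.1 ≤ n' + 1),
        ← Finset.sum_eq_sum_Ico_succ_bot (by omega : j.1 < n' + 1)]
    rw [h1, h2, h3, Finset.range_eq_Ico, h4, hRval j]
    ring
  -- weight of the candidate shape
  have hκwt : ∀ j : Fin (n' + 1), (∀ k, 0 ≤ rhoD j ρ k) →
      (wt (natC (rhoD j ρ)) : ℤ) =
        ∑ i ∈ Finset.range n', (if i < j.1 then R i else R (i + 1) - 1) := by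
    intro j hpos
    have hz : ∀ i, n' ≤ i → natC (rhoD j ρ) i = 0 := fun i hi => dif_neg (by omega)
    rw [wt_eq_sum_range hz]
    push_cast
    apply Finset.sum_congr rfl
    intro i hi
    simp only [Finset.mem_range] at hi
    rw [show natC (rhoD j ρ) i = (rhoD j ρ ⟨i, hi⟩).toNat from dif_pos hi]
    rw [Int.toNat_of_nonneg (hpos ⟨i, hi⟩), hrhoDval j ⟨i, hi⟩]
  -- equivalence of the combinatorial condition with the interlacing description
  have hBC : ∀ j : Fin (n' + 1),
      ((∀ k, 0 ≤ rhoD j ρ k) ∧ natC (rhoD j ρ) ∈ SZ n' ν (ρ j + ((n' : ℤ) - j.1)))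
        ↔ Cn j.1 := by
    intro j
    constructor
    · rintro ⟨hpos, hpart, hstrip, hwteq⟩
      have hκval : ∀ i : ℕ, i < n' → (natC (rhoD j ρ) i : ℤ) =
          (if i < j.1 then R i else R (i + 1) - 1) := by
        intro i hi
        rw [show natC (rhoD j ρ) i = (rhoD j ρ ⟨i, hi⟩).toNat from dif_pos hi]
        rw [Int.toNat_of_nonneg (hpos ⟨i, hi⟩), hrhoDval j ⟨i, hi⟩]
      refine ⟨?_, ?_, ?_, ?_⟩
      · intro i hi
        have h1 := (hstrip (i - 1)).1
        have h2 : natC (rhoD j ρ) (i - 1) = 0 := dif_neg (by omega)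
        rw [h2] at h1
        have : i - 1 + 1 = i := by omega
        rw [this] at h1
        omega
      · rw [hκwt j hpos] at hwteq
        rw [← sumRhoD j]
        omega
      · intro k hk
        have hkn : k < n' := by have := j.2; omega
        have h1 := (hstrip k).1
        have h2 := (hstrip k).2
        have h3 := hκval k hkn
        rw [if_pos hk] at h3
        simp only [hP]
        constructor <;> omega
      · intro k hk1 hk2
        have hkn : k - 1 < n' := by omega
        have h1 := (hstrip (k - 1)).1
        have h2 := (hstrip (k - 1)).2
        have h3 := hκval (k - 1) hkn
        rw [if_neg (by omega)] at h3
        have he : k - 1 + 1 = k := by omega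
        rw [he] at h1 h3
        simp only [hQ]
        constructor <;> omega
    · rintro ⟨hvan, hwsum, hPs, hQs⟩
      have hpos : ∀ k : Fin n', 0 ≤ rhoD j ρ k := by
        intro k
        rw [hrhoDval j k]
        by_cases h : k.1 < j.1
        · rw [if_pos h]
          have hp := hPs k.1 h
          simp only [hP] at hp
          have hnn : (0 : ℤ) ≤ (ν (k.1 + 1) : ℤ) := by positivity
          omega
        · rw [if_neg h]
          have hq := hQs (k.1 + 1) (by omega) (by omega)
          simp only [hQ] at hq
          have hnn : (0 : ℤ) ≤ (ν (k.1 + 1) : ℤ) := by positivity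
          omega
      have hκval : ∀ i : ℕ, i < n' → (natC (rhoD j ρ) i : ℤ) =
          (if i < j.1 then R i else R (i + 1) - 1) := by
        intro i hi
        rw [show natC (rhoD j ρ) i = (rhoD j ρ ⟨i, hi⟩).toNat from dif_pos hi]
        rw [Int.toNat_of_nonneg (hpos ⟨i, hi⟩), hrhoDval j ⟨i, hi⟩]
      refine ⟨hpos, natC_partition _ (rhoD_antitone j ρ hρ), ?_, ?_⟩
      · intro i
        by_cases hi : i < n'
        · have h3 := hκval i hi
          by_cases h : i < j.1
          · rw [if_pos h] at h3
            have hp := hPs i h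
            simp only [hP] at hp
            constructor <;> omega
          · rw [if_neg h] at h3
            have hq := hQs (i + 1) (by omega) (by omega)
            simp only [hQ] at hq
            have he : i + 1 - 1 = i := by omega
            rw [he] at hq
            constructor <;> omega
        · have h2 : natC (rhoD j ρ) i = 0 := dif_neg (by omega)
          have h1 : ν (i + 1) = 0 := hvan (i + 1) (by omega)
          constructor <;> omega
      · rw [hκwt j hpos, ← hwsum, ← sumRhoD j]
        try ring
  -- replace the condition in the sum
  have hsum : (∑ j : Fin (n' + 1), (-1 : ℤ) ^ (n' - j.1) *
      (if ((∀ k, 0 ≤ rhoD j ρ k) ∧ natC (rhoD j ρ) ∈ SZ n' ν (ρ j + ((n' : ℤ) - j.1)))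
        then 1 else 0)) =
      ∑ j : Fin (n' + 1), (-1 : ℤ) ^ (n' - j.1) * (if Cn j.1 then 1 else 0) := by
    apply Finset.sum_congr rfl
    intro j _
    congr 1
    exact if_congr (hBC j) rfl rfl
  rw [hsum]
  -- the right-hand side condition
  have hRHS : (∀ i : ℕ, (ν i : ℤ) = (if h : i < n' + 1 then ρ ⟨i, h⟩ else 0)) ↔
      (∀ i : ℕ, (ν i : ℤ) = R i) := Iff.rfl
  by_cases hsup : (∀ i, n' + 1 ≤ i → ν i = 0) ∧
      (∑ k ∈ Finset.range (n' + 1), R k = (wt ν : ℤ))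
  · by_cases hA : ∀ k, k < n' + 1 → P k
    · -- all interlacing: ρ = ν, sum = 1
      have hwt2 : (wt ν : ℤ) = ∑ k ∈ Finset.range (n' + 1), (ν k : ℤ) := by
        rw [wt_eq_sum_range hsup.1]
        push_cast
        rfl
      have heq : ∀ i ∈ Finset.range (n' + 1), R i = (ν i : ℤ) := by
        apply (Finset.sum_eq_sum_iff_of_le (fun i hi => (hA i (Finset.mem_range.mp hi)).2)).mp
        rw [hsup.2, hwt2]
      have hRHS1 : ∀ i : ℕ, (ν i : ℤ) = R i := by
        intro i
        by_cases hi : i < n' + 1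
        · exact (heq i (Finset.mem_range.mpr hi)).symm
        · rw [hR]
          simp only [dif_neg hi]
          rw [hsup.1 i (by omega)]
          rfl
      rw [if_pos (hRHS.mpr hRHS1)]
      rw [Finset.sum_eq_single (Fin.last n')]
      · have hClast : Cn (Fin.last n').1 := by
          refine ⟨hsup.1, hsup.2, fun k hk => hA k (by
            have hlast : (Fin.last n').1 = n' := rfl
            omega), fun k hk1 hk2 => ?_⟩
          exfalso
          have hlast : (Fin.last n').1 = n' := rfl
          omega
        rw [if_pos hClast]
        have : n' - (Fin.last n').1 = 0 := by
          have : (Fin.last n').1 = n' := rfl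
          omega
        rw [this, pow_zero, mul_one]
      · intro j _ hj
        have hlast : (Fin.last n').1 = n' := rfl
        have hjv : j.1 < n' := by
          have := j.2
          by_contra h
          exact hj (Fin.ext (by omega))
        have hnC : ¬ Cn j.1 := by
          rintro ⟨_, _, _, hQs⟩
          have hq := hQs n' (by omega) (by omega)
          have hp := hA n' (by omega)
          simp only [hP] at hp
          simp only [hQ] at hq
          omega
        rw [if_neg hnC, mul_zero]
      · intro h
        exact absurd (Finset.mem_univ _) h
    · -- there is a first failure of P
      have hex : ∃ k, k < n' + 1 ∧ ¬ P k := by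
        push_neg at hA
        obtain ⟨k, hk1, hk2⟩ := hA
        exact ⟨k, hk1, hk2⟩
      set a := Nat.find hex with ha_def
      have ha : a < n' + 1 ∧ ¬ P a := Nat.find_spec hex
      have hmin : ∀ k, k < a → P k := by
        intro k hk
        by_contra hPk
        exact (Nat.find_min hex hk) ⟨by omega, hPk⟩
      -- RHS is 0
      have hRHS0 : ¬ (∀ i : ℕ, (ν i : ℤ) = R i) := by
        intro h
        apply ha.2
        simp only [hP]
        constructor
        · rw [← h a]
          exact_mod_cast hν.1 a (a + 1) (by omega)
        · rw [← h a]
      rw [if_neg (fun hc => hRHS0 (hRHS.mp hc))]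
      -- structure of nonzero terms
      have hCj_imp : ∀ j : Fin (n' + 1), Cn j.1 → (j.1 = a ∨ (1 ≤ a ∧ j.1 = a - 1)) := by
        intro j hC
        have h1 : j.1 ≤ a := by
          by_contra h
          exact ha.2 (hC.2.2.1 a (by omega))
        have h2 : a ≤ j.1 + 1 := by
          by_contra h
          have hPa1 := hmin (a - 1) (by omega)
          have hQa1 := hC.2.2.2 (a - 1) (by omega) (by omega)
          simp only [hP] at hPa1
          simp only [hQ] at hQa1
          omega
        omega
      have hCa_to_Ca1 : Cn (a - 1) → 1 ≤ a → Cn a := by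
        rintro ⟨c1, c2, _c3, c4⟩ ha1
        exact ⟨c1, c2, fun k hk => hmin k hk, fun k hk1 hk2 => c4 k (by omega) hk2⟩
      have hkey : Cn a → (1 ≤ a ∧ Q a) := by
        rintro ⟨c1, c2, _c3, c4⟩
        have hlow : (ν a : ℤ) + 1 ≤ R a := by
          have hnPa := ha.2
          simp only [hP] at hnPa
          push_neg at hnPa
          by_cases hc1 : (ν a : ℤ) < R a
          · omega
          · -- R a ≤ ν a hence R a < ν (a+1)
            have hc2 : R a < (ν (a + 1) : ℤ) := by
              by_cases hc3 : (ν (a + 1) : ℤ) ≤ R a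
              · exfalso
                have := hnPa hc3
                omega
              · omega
            by_cases han : a = n'
            · -- weight contradiction
              exfalso
              have hν1 : ν (a + 1) = 0 := c1 (a + 1) (by omega)
              rw [hν1] at hc2
              have hsum1 : ∑ k ∈ Finset.range (n' + 1), R k =
                  (∑ k ∈ Finset.range n', R k) + R n' := Finset.sum_range_succ R n'
              have hsum2 : (wt ν : ℤ) = (∑ k ∈ Finset.range n', (ν k : ℤ)) + (ν n' : ℤ) := by
                rw [wt_eq_sum_range hsup.1]
                push_cast
                rw [Finset.sum_range_succ]
              have hle : ∀ k ∈ Finset.range n', R k ≤ (ν k : ℤ) := by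
                intro k hk
                simp only [Finset.mem_range] at hk
                have := hmin k (by omega)
                simp only [hP] at this
                exact this.2
              have hsle := Finset.sum_le_sum hle
              have : (0 : ℤ) ≤ (ν n' : ℤ) := by positivity
              rw [han] at hc2
              omega
            · -- a < n' : contradiction with Q (a+1) and monotonicity
              exfalso
              have haa : a < n' := by omega
              have hq := c4 (a + 1) (by omega) (by omega)
              simp only [hQ] at hq
              have hm := hRmono a (a + 1) (by omega) (by omega)
              omega
        have ha1 : 1 ≤ a := by
          by_contra h
          have ha0 : a = 0 := by omega
          -- weight contradiction: every R k ≥ ν k + 1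
          have hge : ∀ k ∈ Finset.range (n' + 1), (ν k : ℤ) + 1 ≤ R k := by
            intro k hk
            simp only [Finset.mem_range] at hk
            by_cases hk0 : k = 0
            · rw [hk0]
              rw [ha0] at hlow
              exact hlow
            · have := c4 k (by omega) hk
              simp only [hQ] at this
              exact this.1
          have hsge := Finset.sum_le_sum hge
          rw [Finset.sum_add_distrib, Finset.sum_const, Finset.card_range] at hsge
          have hwt2 : (wt ν : ℤ) = ∑ k ∈ Finset.range (n' + 1), (ν k : ℤ) := by
            rw [wt_eq_sum_range hsup.1]
            push_cast
            rfl
          rw [c2] at hsge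
          rw [← hwt2] at hsge
          simp only [nsmul_eq_mul, mul_one] at hsge
          omega
        refine ⟨ha1, ?_, ?_⟩
        · exact hlow
        · -- upper bound
          have hp := hmin (a - 1) (by omega)
          simp only [hP] at hp
          have hm := hRmono (a - 1) a (by omega) ha.1
          omega
      by_cases hCa : Cn a
      · obtain ⟨ha1, hQa⟩ := hkey hCa
        have hCa1 : Cn (a - 1) := by
          obtain ⟨c1, c2, _c3, c4⟩ := hCa
          refine ⟨c1, c2, fun k hk => hmin k (by omega), fun k hk1 hk2 => ?_⟩
          by_cases hka : k = a
          · rw [hka]; exact hQa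
          · exact c4 k (by omega) hk2
        have hane : a ≤ n' := by omega
        rw [← Finset.sum_subset
          (Finset.subset_univ {(⟨a - 1, by omega⟩ : Fin (n' + 1)), ⟨a, ha.1⟩})]
        · rw [Finset.sum_pair (by
            intro h
            have := congrArg Fin.val h
            simp only at this
            omega)]
          rw [if_pos hCa1, if_pos hCa, mul_one, mul_one]
          have hexp : n' - (a - 1) = (n' - a) + 1 := by omega
          simp only
          rw [hexp, pow_succ]
          ring
        · intro j _ hj
          by_cases hCj : Cn j.1
          · exfalso
            rcases hCj_imp j hCj with h | h
            · exact hj (by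
                simp only [Finset.mem_insert, Finset.mem_singleton]
                right
                exact Fin.ext h)
            · exact hj (by
                simp only [Finset.mem_insert, Finset.mem_singleton]
                left
                exact Fin.ext h.2)
          · rw [if_neg hCj, mul_zero]
      · apply Finset.sum_eq_zero
        intro j _
        have hnCj : ¬ Cn j.1 := by
          intro hCj
          rcases hCj_imp j hCj with h | h
          · rw [h] at hCj
            exact hCa hCj
          · rw [h.2] at hCj
            exact hCa (hCa_to_Ca1 hCj h.1)
        rw [if_neg hnCj, mul_zero]
  · -- no chance: every term vanishes and the RHS is 0
    have hnC : ∀ j : Fin (n' + 1), ¬ Cn j.1 := by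
      intro j hC
      exact hsup ⟨hC.1, hC.2.1⟩
    rw [Finset.sum_eq_zero (fun j _ => by rw [if_neg (hnC j), mul_zero])]
    symm
    rw [if_neg]
    intro hc
    have hc' := hRHS.mp hc
    apply hsup
    have hvan : ∀ i, n' + 1 ≤ i → ν i = 0 := by
      intro i hi
      have := hc' i
      rw [hR] at this
      simp only [dif_neg (by omega : ¬ i < n' + 1)] at this
      omega
    refine ⟨hvan, ?_⟩
    rw [wt_eq_sum_range hvan]
    push_cast
    exact Finset.sum_congr rfl (fun i _ => (hc' i).symm)

/-- THE key identity: the signed sum of Kostka numbers with contents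
`σ(ρ+δ)-δ` is `1` if `ν = ρ` and `0` otherwise. -/
theorem star : ∀ (n : ℕ) (ν : ℕ → ℕ), IsPartitionF ν → ∀ ρ : Fin n → ℤ,
    (∀ i j : Fin n, i ≤ j → ρ j ≤ ρ i) →
    Gsum n ν ρ =
      if (∀ i : ℕ, (ν i : ℤ) = (if h : i < n then ρ ⟨i, h⟩ else 0)) then 1 else 0 := by
  intro n
  induction n with
  | zero =>
    intro ν hν ρ hρ
    unfold Gsum
    rw [Finset.sum_eq_single 1]
    · rw [show ((Equiv.Perm.sign (1 : Equiv.Perm (Fin 0)) : ℤˣ) : ℤ) = 1 by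
        rw [map_one]; rfl]
      rw [one_mul]
      rw [show KZ ν (cvec 0 ρ 1) = (kostkaNum ν (natC (cvec 0 ρ 1)) : ℤ) from
        if_pos (fun i => i.elim0)]
      have hz : ∀ a, natC (cvec 0 ρ 1) a = 0 := fun a => dif_neg (by omega)
      rw [kostka_empty hν hz]
      have hiff : (∀ i, ν i = 0) ↔
          (∀ i : ℕ, (ν i : ℤ) = (if h : i < 0 then ρ ⟨i, h⟩ else 0)) := by
        constructor
        · intro h i
          rw [dif_neg (by omega : ¬ i < 0), h i]
          rfl
        · intro h i
          have := h i
          rw [dif_neg (by omega : ¬ i < 0)] at this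
          omega
      rw [if_congr hiff rfl rfl]
      split_ifs <;> rfl
    · intro σ _ hσ
      exfalso
      exact hσ (Equiv.ext (fun i => i.elim0))
    · intro h
      exact absurd (Finset.mem_univ _) h
  | succ n' IH =>
    intro ν hν ρ hρ
    unfold Gsum
    rw [← Fintype.sum_bijective Emap (Emap_bijective n')
      (fun p => ((Equiv.Perm.sign (Emap p) : ℤˣ) : ℤ) * KZ ν (cvec (n' + 1) ρ (Emap p)))
      (fun σ => ((Equiv.Perm.sign σ : ℤˣ) : ℤ) * KZ ν (cvec (n' + 1) ρ σ))
      (fun p => rfl)]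
    rw [Fintype.sum_prod_type]
    have hsign : ∀ (j : Fin (n' + 1)) (τ : Equiv.Perm (Fin n')),
        ((Equiv.Perm.sign (Emap (j, τ)) : ℤˣ) : ℤ) =
          (-1 : ℤ) ^ (n' - j.1) * ((Equiv.Perm.sign τ : ℤˣ) : ℤ) := by
      intro j τ
      rw [show Equiv.Perm.sign (Emap (j, τ)) = (-1 : ℤˣ) ^ (n' - (j, τ).1.1) *
        Equiv.Perm.sign (j, τ).2 from sign_Emap (j, τ)]
      push_cast
      rfl
    have hstep : ∀ j : Fin (n' + 1),
        (∑ τ : Equiv.Perm (Fin n'),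
          ((Equiv.Perm.sign (Emap (j, τ)) : ℤˣ) : ℤ) * KZ ν (cvec (n' + 1) ρ (Emap (j, τ)))) =
        (-1 : ℤ) ^ (n' - j.1) *
          (if ((∀ k, 0 ≤ rhoD j ρ k) ∧
              natC (rhoD j ρ) ∈ SZ n' ν (ρ j + ((n' : ℤ) - j.1))) then 1 else 0) := by
      intro j
      set w := ρ j + ((n' : ℤ) - j.1) with hw
      set Fj := (SZ_finite n' ν w).toFinset with hFj
      have hKZb : ∀ τ : Equiv.Perm (Fin n'), KZ ν (cvec (n' + 1) ρ (Emap (j, τ))) =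
          ∑ κ ∈ Fj, (if κ ∈ SZ n' ν w then KZ κ (cvec n' (rhoD j ρ) τ) else 0) := by
        intro τ
        rw [KZ_branch hν ρ j τ]
        apply finsum_eq_finset_sum_of_support_subset
        intro κ hκ
        simp only [Function.mem_support, ne_eq, ite_eq_right_iff, not_forall] at hκ
        simp only [hFj, Set.Finite.coe_toFinset]
        exact hκ.choose
      calc (∑ τ : Equiv.Perm (Fin n'),
          ((Equiv.Perm.sign (Emap (j, τ)) : ℤˣ) : ℤ) * KZ ν (cvec (n' + 1) ρ (Emap (j, τ))))
          = ∑ τ : Equiv.Perm (Fin n'), ∑ κ ∈ Fj,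
              (-1 : ℤ) ^ (n' - j.1) * (if κ ∈ SZ n' ν w then
                ((Equiv.Perm.sign τ : ℤˣ) : ℤ) * KZ κ (cvec n' (rhoD j ρ) τ) else 0) := by
            apply Finset.sum_congr rfl
            intro τ _
            rw [hsign j τ, hKZb τ, mul_assoc, Finset.mul_sum]
            congr 1
            rw [Finset.mul_sum]
            apply Finset.sum_congr rfl
            intro κ _
            rw [mul_ite, mul_zero]
        _ = ∑ κ ∈ Fj, (-1 : ℤ) ^ (n' - j.1) * (if κ ∈ SZ n' ν w then
              Gsum n' κ (rhoD j ρ) else 0) := by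
            rw [Finset.sum_comm]
            apply Finset.sum_congr rfl
            intro κ _
            rw [← Finset.mul_sum]
            congr 1
            by_cases hκ : κ ∈ SZ n' ν w
            · simp only [if_pos hκ]
              rfl
            · simp only [if_neg hκ, Finset.sum_const_zero]
        _ = ∑ κ ∈ Fj, (-1 : ℤ) ^ (n' - j.1) * (if κ = natC (rhoD j ρ) then
              (if ((∀ k, 0 ≤ rhoD j ρ k) ∧ natC (rhoD j ρ) ∈ SZ n' ν w) then 1 else 0)
              else 0) := by
            apply Finset.sum_congr rfl
            intro κ _
            congr 1
            by_cases hκ : κ ∈ SZ n' ν w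
            · rw [if_pos hκ, IH κ hκ.1 (rhoD j ρ) (rhoD_antitone j ρ hρ)]
              by_cases hM : ∀ i : ℕ, (κ i : ℤ) =
                  (if h : i < n' then rhoD j ρ ⟨i, h⟩ else 0)
              · rw [if_pos hM]
                have hpos : ∀ k, 0 ≤ rhoD j ρ k := by
                  intro k
                  have := hM k.1
                  rw [dif_pos k.2] at this
                  have hk : (⟨k.1, k.2⟩ : Fin n') = k := rfl
                  rw [hk] at this
                  omega
                have hκeq : κ = natC (rhoD j ρ) := by
                  funext i
                  by_cases hi : i < n'
                  · have := hM i
                    rw [dif_pos hi] at this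
                    rw [show natC (rhoD j ρ) i = (rhoD j ρ ⟨i, hi⟩).toNat from dif_pos hi]
                    omega
                  · have := hM i
                    rw [dif_neg hi] at this
                    rw [show natC (rhoD j ρ) i = 0 from dif_neg hi]
                    omega
                rw [if_pos hκeq, if_pos ⟨hpos, hκeq ▸ hκ⟩]
              · rw [if_neg hM]
                by_cases hκeq : κ = natC (rhoD j ρ)
                · rw [if_pos hκeq]
                  by_cases hB : ((∀ k, 0 ≤ rhoD j ρ k) ∧ natC (rhoD j ρ) ∈ SZ n' ν w)
                  · exfalso
                    apply hM
                    intro i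
                    by_cases hi : i < n'
                    · rw [dif_pos hi, hκeq,
                        show natC (rhoD j ρ) i = (rhoD j ρ ⟨i, hi⟩).toNat from dif_pos hi,
                        Int.toNat_of_nonneg (hB.1 ⟨i, hi⟩)]
                    · rw [dif_neg hi, hκeq, show natC (rhoD j ρ) i = 0 from dif_neg hi]
                      rfl
                  · rw [if_neg hB]
                · rw [if_neg hκeq]
            · rw [if_neg hκ]
              by_cases hκeq : κ = natC (rhoD j ρ)
              · rw [if_pos hκeq]
                by_cases hB : ((∀ k, 0 ≤ rhoD j ρ k) ∧ natC (rhoD j ρ) ∈ SZ n' ν w)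
                · exfalso
                  exact hκ (hκeq ▸ hB.2)
                · rw [if_neg hB]
              · rw [if_neg hκeq]
        _ = (-1 : ℤ) ^ (n' - j.1) *
              (if ((∀ k, 0 ≤ rhoD j ρ k) ∧ natC (rhoD j ρ) ∈ SZ n' ν w) then 1 else 0) := by
            rw [← Finset.mul_sum]
            congr 1
            rw [Finset.sum_ite_eq' Fj (natC (rhoD j ρ))]
            by_cases hB : ((∀ k, 0 ≤ rhoD j ρ k) ∧ natC (rhoD j ρ) ∈ SZ n' ν w)
            · rw [if_pos (by
                simp only [hFj, Set.Finite.mem_toFinset]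
                exact hB.2)]
            · rw [if_neg hB, ite_self]
    rw [Finset.sum_congr rfl (fun j _ => hstep j)]
    exact lemL n' ν hν ρ hρ


end
section


lemma tele_sum (f : ℕ → ℕ) (hf : ∀ a b : ℕ, a ≤ b → f b ≤ f a) :
    ∀ m j : ℕ, j ≤ m →
      (∑ a ∈ Finset.range m, (if j ≤ a then f a - f (a + 1) else 0)) = f j - f m := by
  intro m
  induction m with
  | zero =>
    intro j hj
    have hj0 : j = 0 := by omega
    subst hj0
    simp only [Finset.range_zero, Finset.sum_empty]
    omega
  | succ m ih =>
    intro j hj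
    rw [Finset.sum_range_succ]
    by_cases hjm : j ≤ m
    · rw [ih j hjm, if_pos hjm]
      have h1 := hf j m hjm
      have h2 := hf m (m + 1) (by omega)
      omega
    · have hj1 : j = m + 1 := by omega
      subst hj1
      rw [if_neg hjm, Finset.sum_eq_zero (fun a ha => by
        simp only [Finset.mem_range] at ha
        rw [if_neg (by omega)])]
      omega

/-- recovering a partition with parts `≤ n-1` from its multiplicity vector. -/
lemma partOfMult_multVec (n : ℕ) (mu : ℕ → ℕ) (hmu : IsPartitionF mu)
    (hm1 : mu 0 ≤ n - 1) : partOfMult (multVec n mu) = mu := by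
  have hconj : (fun j => ∑ a : Fin (n - 1), if j ≤ a.1 then multVec n mu a else 0) =
      conj mu := by
    funext j
    have hrange : (∑ a : Fin (n - 1), if j ≤ a.1 then multVec n mu a else 0) =
        ∑ a ∈ Finset.range (n - 1), (if j ≤ a then conj mu a - conj mu (a + 1) else 0) := by
      rw [← Fin.sum_univ_eq_sum_range (fun a => if j ≤ a then conj mu a - conj mu (a + 1)
        else 0) (n - 1)]
      rfl
    rw [hrange]
    by_cases hj : j ≤ n - 1
    · rw [tele_sum (conj mu) (fun a b hab => conj_antitone hmu.2 hab) (n - 1) j hj]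
      rw [conj_eq_zero hmu hm1]
      omega
    · rw [Finset.sum_eq_zero (fun a ha => by
        simp only [Finset.mem_range] at ha
        rw [if_neg (by omega)])]
      rw [conj_eq_zero hmu (by omega)]
  unfold partOfMult
  rw [hconj, conj_conj hmu]
theorem statement15' (n : ℕ) (hn : 2 ≤ n) (lam mu : ℕ → ℕ)
    (hlam : IsPartitionF lam) (hmu : IsPartitionF mu)
    (hwt : wt lam = wt mu) (hl1 : lam 0 ≤ n) (hm1 : mu 0 ≤ n - 1) :
    kostkaPoly lam mu =
    ∑ σ : Equiv.Perm (Fin n), (Equiv.Perm.sign σ : ℤ) •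
      supernomial n (multVec n mu)
        (fun i => ((conj lam (σ i).1 : ℚ) + ((n : ℚ) - 1 - ((σ i).1 : ℚ))) -
          ((n : ℚ) - 1 - (i.1 : ℚ))) := by
  set d := wt lam with hd
  set ρ : Fin n → ℤ := fun i => (conj lam i.1 : ℤ) with hρdef
  have hρ : ∀ i j : Fin n, i ≤ j → ρ j ≤ ρ i := by
    intro i j hij
    simp only [hρdef]
    exact_mod_cast conj_antitone hlam.2 (show i.1 ≤ j.1 from hij)
  have hconjzero : ∀ a, n ≤ a → conj lam a = 0 := by
    intro a ha
    exact conj_eq_zero hlam (by omega)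
  have hvrel : ∀ (σ : Equiv.Perm (Fin n)) (i : Fin n),
      ((conj lam (σ i).1 : ℚ) + ((n : ℚ) - 1 - ((σ i).1 : ℚ))) - ((n : ℚ) - 1 - (i.1 : ℚ))
      = ((cvec n ρ σ i : ℤ) : ℚ) := by
    intro σ i
    simp only [cvec, hρdef]
    push_cast
    ring
  have hPF := finite_partitions d
  set PF := hPF.toFinset with hPFdef
  set K : (ℕ → ℕ) → Polynomial ℚ :=
    fun ν => kostkaPoly (conj ν) (partOfMult (multVec n mu)) with hK
  have hstep : ∀ σ : Equiv.Perm (Fin n),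
      (Equiv.Perm.sign σ : ℤ) • supernomial n (multVec n mu)
        (fun i => ((conj lam (σ i).1 : ℚ) + ((n : ℚ) - 1 - ((σ i).1 : ℚ))) -
          ((n : ℚ) - 1 - (i.1 : ℚ))) =
      ∑ ν ∈ PF, (((Equiv.Perm.sign σ : ℤˣ) : ℤ) * KZ ν (cvec n ρ σ)) • K ν := by
    intro σ
    set c := cvec n ρ σ with hc
    by_cases hNat : IsNatVec (fun i : Fin n =>
        ((conj lam (σ i).1 : ℚ) + ((n : ℚ) - 1 - ((σ i).1 : ℚ))) -
          ((n : ℚ) - 1 - (i.1 : ℚ)))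
    · have hpos : ∀ i, 0 ≤ c i := by
        intro i
        obtain ⟨m, hm⟩ := hNat i
        beta_reduce at hm
        rw [hvrel σ i] at hm
        have : c i = (m : ℤ) := by exact_mod_cast hm
        omega
      have hnv : natVec (fun i : Fin n =>
          ((conj lam (σ i).1 : ℚ) + ((n : ℚ) - 1 - ((σ i).1 : ℚ))) -
            ((n : ℚ) - 1 - (i.1 : ℚ))) = natC c := by
        funext i
        unfold natVec natC
        by_cases hi : i < n
        · rw [dif_pos hi, dif_pos hi]
          beta_reduce
          rw [hvrel σ ⟨i, hi⟩, Rat.num_intCast]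
        · rw [dif_neg hi, dif_neg hi]
      have hsumc : ∑ i : Fin n, c i = (d : ℤ) := by
        have h1 : ∑ i : Fin n, c i = ∑ i : Fin n, ρ i := by
          simp only [hc, cvec]
          rw [Finset.sum_sub_distrib, Finset.sum_add_distrib]
          rw [Equiv.sum_comp σ ρ, Equiv.sum_comp σ (fun i : Fin n => ((n : ℤ) - 1 - (i.1 : ℤ)))]
          ring
        rw [h1]
        have h2 : ∑ i : Fin n, ρ i = ∑ i ∈ Finset.range n, (conj lam i : ℤ) :=
          Fin.sum_univ_eq_sum_range (fun i => (conj lam i : ℤ)) n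
        rw [h2, hd, ← wt_conj hlam, wt_eq_sum_range hconjzero]
        push_cast
        rfl
      have hwtv : wt (natC c) = d := by
        have hz : ∀ i, n ≤ i → natC c i = 0 := fun i hi => dif_neg (by omega)
        have h1 : (wt (natC c) : ℤ) = ∑ i ∈ Finset.range n, (natC c i : ℤ) := by
          rw [wt_eq_sum_range hz]
          push_cast
          rfl
        have h2 : ∑ i ∈ Finset.range n, (natC c i : ℤ) = ∑ i : Fin n, c i := by
          rw [← Fin.sum_univ_eq_sum_range (fun i => (natC c i : ℤ)) n]
          apply Finset.sum_congr rfl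
          intro i _
          show (natC c i.1 : ℤ) = c i
          unfold natC
          rw [dif_pos i.2, Int.toNat_of_nonneg (hpos _)]
        have := h1.trans (h2.trans hsumc)
        exact_mod_cast this
      unfold supernomial
      rw [if_pos hNat, hnv, hwtv]
      have hset : {nu : ℕ → ℕ | IsPartitionF nu ∧ wt nu = d} = ↑PF := by
        rw [hPFdef, Set.Finite.coe_toFinset]
      rw [hset, finsum_mem_coe_finset, Finset.smul_sum]
      apply Finset.sum_congr rfl
      intro ν _
      rw [show KZ ν c = (kostkaNum ν (natC c) : ℤ) from if_pos hpos]
      rw [zsmul_eq_mul, zsmul_eq_mul]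
      push_cast
      ring
    · unfold supernomial
      rw [if_neg hNat, smul_zero]
      symm
      apply Finset.sum_eq_zero
      intro ν _
      have hKZ : KZ ν c = 0 := by
        apply if_neg
        intro hall
        apply hNat
        intro i
        refine ⟨(c i).toNat, ?_⟩
        beta_reduce
        rw [hvrel σ i]
        have h1 : ((c i).toNat : ℤ) = c i := Int.toNat_of_nonneg (hall i)
        exact_mod_cast h1.symm
      rw [hKZ, mul_zero, zero_smul]
  rw [Finset.sum_congr rfl (fun σ _ => hstep σ)]
  rw [Finset.sum_comm]
  have hinner : ∀ ν ∈ PF, (∑ σ : Equiv.Perm (Fin n),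
      (((Equiv.Perm.sign σ : ℤˣ) : ℤ) * KZ ν (cvec n ρ σ)) • K ν) =
      (if ν = conj lam then K ν else 0) := by
    intro ν hν
    have hνpart : IsPartitionF ν ∧ wt ν = d := hPF.mem_toFinset.mp hν
    rw [← Finset.sum_smul]
    rw [show (∑ σ : Equiv.Perm (Fin n), ((Equiv.Perm.sign σ : ℤˣ) : ℤ) * KZ ν (cvec n ρ σ))
      = Gsum n ν ρ from rfl]
    rw [star n ν hνpart.1 ρ hρ]
    have hcond : (∀ i : ℕ, (ν i : ℤ) = (if h : i < n then ρ ⟨i, h⟩ else 0)) ↔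
        ν = conj lam := by
      constructor
      · intro h
        funext i
        by_cases hi : i < n
        · have := h i
          rw [dif_pos hi] at this
          simp only [hρdef] at this
          exact_mod_cast this
        · have := h i
          rw [dif_neg hi] at this
          rw [hconjzero i (by omega)]
          omega
      · intro h i
        subst h
        by_cases hi : i < n
        · rw [dif_pos hi]
        · rw [dif_neg hi, hconjzero i (by omega)]
          rfl
    rw [if_congr hcond rfl rfl]
    by_cases h : ν = conj lam
    · rw [if_pos h, if_pos h, one_smul]
    · rw [if_neg h, if_neg h, zero_smul]
  rw [Finset.sum_congr rfl hinner]
  rw [Finset.sum_ite_eq' PF (conj lam)]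
  rw [if_pos (by
    rw [hPFdef, Set.Finite.mem_toFinset]
    exact ⟨isPartitionF_conj hlam, wt_conj hlam⟩)]
  simp only [hK]
  rw [conj_conj hlam, partOfMult_multVec n mu hmu hm1]


end

/-- the Kostka polynomial as a signed sum of antisymmetric
supernomials, `K_{λμ}(q) = ∑_σ ε(σ) [m(μ); σ(λ'+δ) - δ]` with
`δ = (n-1,…,1,0)`. -/
theorem statement15 (n : ℕ) (hn : 2 ≤ n) (lam mu : ℕ → ℕ)
    (hlam : IsPartitionF lam) (hmu : IsPartitionF mu)
    (hwt : wt lam = wt mu) (hl1 : lam 0 ≤ n) (hm1 : mu 0 ≤ n - 1) :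
    kostkaPoly lam mu =
    ∑ σ : Equiv.Perm (Fin n), (Equiv.Perm.sign σ : ℤ) •
      supernomial n (multVec n mu)
        (fun i => ((conj lam (σ i).1 : ℚ) + ((n : ℚ) - 1 - ((σ i).1 : ℚ))) -
          ((n : ℚ) - 1 - (i.1 : ℚ))) :=
  statement15' n hn lam mu hlam hmu hwt hl1 hm1

end

end ABailey
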